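/- arXiv:1805.00117 — 8 statements merged into one kernel-verified Lean document; each statement's English description precedes it below -/
import Mathlib

section
/- For the relative fitnesses r_1, …, r_{N−1} of the Moran process, exactly one of the following holds: r_i < r_{i+1} for all 1 ≤ i ≤ N−2, or r_i > r_{i+1} for all 1 ≤ i ≤ N−2, or r_i = r_{i+1} for all 1 ≤ i ≤ N−2; that is, the sequence (r_i) is either strictly increasing, strictly decreasing, or constant. -/
/-!
Both fitnesses are affine in `i`: `f_i = p + q i` and `g_i = s + t i`, so `r_i` is the restriction
of a Möbius map to the integers. For affine maps the cross difference `f_{i+1} g_i - f_i g_{i+1}`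
does not depend on `i` (it is the determinant `q s - p t`), and since `g_i > 0` the difference
`r_{i+1} - r_i` has the sign of this determinant for every `i`.
-/

section Trichotomy

variable {α : Type*} [AddCommGroup α] [LinearOrder α] [IsOrderedAddMonoid α]

theorem exclusive_trichotomy_of_sign_sub_eq {r : ℕ → α} {m : ℕ} (hm : 1 ≤ m) (k : α)
    (h : ∀ i, 1 ≤ i → i ≤ m → SignType.sign (r (i + 1) - r i) = SignType.sign k) :
    ((∀ i, 1 ≤ i → i ≤ m → r i < r (i + 1)) ∧
      ¬(∀ i, 1 ≤ i → i ≤ m → r (i + 1) < r i) ∧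
      ¬(∀ i, 1 ≤ i → i ≤ m → r i = r (i + 1))) ∨
    (¬(∀ i, 1 ≤ i → i ≤ m → r i < r (i + 1)) ∧
      (∀ i, 1 ≤ i → i ≤ m → r (i + 1) < r i) ∧
      ¬(∀ i, 1 ≤ i → i ≤ m → r i = r (i + 1))) ∨
    (¬(∀ i, 1 ≤ i → i ≤ m → r i < r (i + 1)) ∧
      ¬(∀ i, 1 ≤ i → i ≤ m → r (i + 1) < r i) ∧
      (∀ i, 1 ≤ i → i ≤ m → r i = r (i + 1))) := by
  rcases lt_trichotomy k 0 with hk | hk | hk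
  · have hdec : ∀ i, 1 ≤ i → i ≤ m → r (i + 1) < r i := fun i h₁ h₂ =>
      sub_neg.1 (sign_eq_neg_one_iff.1 ((h i h₁ h₂).trans (sign_neg hk)))
    refine Or.inr (Or.inl ⟨fun hinc => ?_, hdec, fun hconst => ?_⟩)
    · exact lt_asymm (hinc 1 le_rfl hm) (hdec 1 le_rfl hm)
    · exact (hdec 1 le_rfl hm).ne' (hconst 1 le_rfl hm)
  · have hconst : ∀ i, 1 ≤ i → i ≤ m → r i = r (i + 1) := fun i h₁ h₂ =>
      (sub_eq_zero.1 (sign_eq_zero_iff.1 ((h i h₁ h₂).trans (hk ▸ sign_zero)))).symm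
    refine Or.inr (Or.inr ⟨fun hinc => ?_, fun hdec => ?_, hconst⟩)
    · exact (hinc 1 le_rfl hm).ne (hconst 1 le_rfl hm)
    · exact (hdec 1 le_rfl hm).ne' (hconst 1 le_rfl hm)
  · have hinc : ∀ i, 1 ≤ i → i ≤ m → r i < r (i + 1) := fun i h₁ h₂ =>
      sub_pos.1 (sign_eq_one_iff.1 ((h i h₁ h₂).trans (sign_pos hk)))
    refine Or.inl ⟨hinc, fun hdec => ?_, fun hconst => ?_⟩
    · exact lt_asymm (hinc 1 le_rfl hm) (hdec 1 le_rfl hm)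
    · exact (hinc 1 le_rfl hm).ne (hconst 1 le_rfl hm)

end Trichotomy

section Mobius

variable {K : Type*} [Field K] [LinearOrder K] [IsStrictOrderedRing K]

theorem sign_div_sub_div_of_pos {f₁ f₂ g₁ g₂ : K} (hg₁ : 0 < g₁) (hg₂ : 0 < g₂) :
    SignType.sign (f₂ / g₂ - f₁ / g₁) = SignType.sign (f₂ * g₁ - g₂ * f₁) := by
  rw [div_sub_div _ _ hg₂.ne' hg₁.ne', div_eq_mul_inv, sign_mul,
    sign_pos (inv_pos.2 (mul_pos hg₂ hg₁)), mul_one]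

theorem sign_affine_div_succ_sub {p q s t x : K} (h₀ : 0 < s + t * x) (h₁ : 0 < s + t * (x + 1)) :
    SignType.sign ((p + q * (x + 1)) / (s + t * (x + 1)) - (p + q * x) / (s + t * x)) =
      SignType.sign (q * s - p * t) := by
  rw [sign_div_sub_div_of_pos h₀ h₁]
  ring_nf

end Mobius

theorem one_sub_add_mul_pos {R : Type*} [Ring R] [LinearOrder R] [IsStrictOrderedRing R]
    {w g : R} (hw0 : 0 ≤ w) (hw1 : w ≤ 1) (hg : 0 < g) : 0 < 1 - w + w * g := by
  rcases hw0.eq_or_lt with rfl | hw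
  · simp
  · exact add_pos_of_nonneg_of_pos (sub_nonneg.2 hw1) (mul_pos hw hg)

theorem moran_relative_fitness_monotone_or_constant_general
    (N : ℕ) (hN : 3 ≤ N) (a b c d w : ℝ)
    (hc : 0 < c) (hd : 0 < d)
    (hw0 : 0 ≤ w) (hw1 : w ≤ 1)
    (r : ℕ → ℝ)
    (hr : ∀ i, 1 ≤ i → i ≤ N - 1 →
      r i = (1 - w + w * (a * ((i : ℝ) - 1) / ((N : ℝ) - 1) +
                b * ((N : ℝ) - (i : ℝ)) / ((N : ℝ) - 1))) /
            (1 - w + w * (c * (i : ℝ) / ((N : ℝ) - 1) +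
                d * ((N : ℝ) - (i : ℝ) - 1) / ((N : ℝ) - 1)))) :
    ((∀ i, 1 ≤ i → i ≤ N - 2 → r i < r (i + 1)) ∧
      ¬(∀ i, 1 ≤ i → i ≤ N - 2 → r (i + 1) < r i) ∧
      ¬(∀ i, 1 ≤ i → i ≤ N - 2 → r i = r (i + 1))) ∨
    (¬(∀ i, 1 ≤ i → i ≤ N - 2 → r i < r (i + 1)) ∧
      (∀ i, 1 ≤ i → i ≤ N - 2 → r (i + 1) < r i) ∧
      ¬(∀ i, 1 ≤ i → i ≤ N - 2 → r i = r (i + 1))) ∨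
    (¬(∀ i, 1 ≤ i → i ≤ N - 2 → r i < r (i + 1)) ∧
      ¬(∀ i, 1 ≤ i → i ≤ N - 2 → r (i + 1) < r i) ∧
      (∀ i, 1 ≤ i → i ≤ N - 2 → r i = r (i + 1))) := by
  have hn : (0 : ℝ) < N - 1 := by
    have : (3 : ℝ) ≤ N := by exact_mod_cast hN
    linarith
  set n : ℝ := N - 1
  set p := 1 - w + w * (b * N - a) / n
  set q := w * (a - b) / n
  set s := 1 - w + w * d * (N - 1) / n
  set t := w * (c - d) / n
  have hden_pos : ∀ x : ℝ, 1 ≤ x → x ≤ n → 0 < s + t * x := fun x h₁ h₂ => by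
    have hg : 0 < c * x / n + d * (N - x - 1) / n :=
      add_pos_of_pos_of_nonneg (div_pos (mul_pos hc (by linarith)) hn)
        (div_nonneg (mul_nonneg hd.le (by linarith)) hn.le)
    exact (one_sub_add_mul_pos hw0 hw1 hg).trans_eq (by ring)
  have hr_affine : ∀ i, 1 ≤ i → i ≤ N - 1 → r i = (p + q * i) / (s + t * i) := fun i h₁ h₂ => by
    rw [hr i h₁ h₂]
    congr 1 <;> ring
  refine exclusive_trichotomy_of_sign_sub_eq (by omega) (q * s - p * t) fun i h₁ h₂ => ?_
  have hi : (1 : ℝ) ≤ i := by exact_mod_cast h₁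
  have hi' : (i : ℝ) + 1 ≤ n := by
    have : ((i + 2 : ℕ) : ℝ) ≤ N := by exact_mod_cast (show i + 2 ≤ N by omega)
    push_cast at this
    linarith
  rw [hr_affine (i + 1) (by omega) (by omega), hr_affine i h₁ (by omega), Nat.cast_succ]
  exact sign_affine_div_succ_sub (hden_pos i hi (by linarith)) (hden_pos (i + 1) (by linarith) hi')

/-- For the relative fitnesses r_1, …, r_{N−1} of the Moran process,
exactly one of the following holds: the sequence (r_i) is strictly increasing,
strictly decreasing, or constant on {1, …, N−1}. -/
theorem moran_relative_fitness_monotone_or_constant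
    (N : ℕ) (hN : 3 ≤ N) (a b c d w : ℝ)
    (ha : 0 < a) (hb : 0 < b) (hc : 0 < c) (hd : 0 < d)
    (hw0 : 0 ≤ w) (hw1 : w ≤ 1)
    (r : ℕ → ℝ)
    (hr : ∀ i, 1 ≤ i → i ≤ N - 1 →
      r i = (1 - w + w * (a * ((i : ℝ) - 1) / ((N : ℝ) - 1) +
                b * ((N : ℝ) - (i : ℝ)) / ((N : ℝ) - 1))) /
            (1 - w + w * (c * (i : ℝ) / ((N : ℝ) - 1) +
                d * ((N : ℝ) - (i : ℝ) - 1) / ((N : ℝ) - 1))))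
    (hrpos : ∀ i, 1 ≤ i → i ≤ N - 1 → 0 < r i) :
    ((∀ i, 1 ≤ i → i ≤ N - 2 → r i < r (i + 1)) ∧
      ¬(∀ i, 1 ≤ i → i ≤ N - 2 → r (i + 1) < r i) ∧
      ¬(∀ i, 1 ≤ i → i ≤ N - 2 → r i = r (i + 1))) ∨
    (¬(∀ i, 1 ≤ i → i ≤ N - 2 → r i < r (i + 1)) ∧
      (∀ i, 1 ≤ i → i ≤ N - 2 → r (i + 1) < r i) ∧
      ¬(∀ i, 1 ≤ i → i ≤ N - 2 → r i = r (i + 1))) ∨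
    (¬(∀ i, 1 ≤ i → i ≤ N - 2 → r i < r (i + 1)) ∧
      ¬(∀ i, 1 ≤ i → i ≤ N - 2 → r (i + 1) < r i) ∧
      (∀ i, 1 ≤ i → i ≤ N - 2 → r i = r (i + 1))) :=
  moran_relative_fitness_monotone_or_constant_general N hN a b c d w hc hd hw0 hw1 r hr
end

section
/- If r_1 < 1 and r_{N−1} < 1, then ρ_A < 1/N and ρ_B > 1/N. Dually, if r_1 > 1 and r_{N−1} > 1, then ρ_A > 1/N and ρ_B < 1/N. (Dominance part of the classification of evolutionary scenarios: invasion scenario B←←A forces replacement scenario B⇐⇐A, and B→→A forces B⇒⇒A.) -/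
/-!
Since g_i > 0, r_i < 1 exactly when f_i < g_i, and f_i − g_i is an affine function of i; so
the sign it has at i = 1 and i = N − 1 persists on the whole range. If all r_k < 1, the
cumulative products P_j = ∏_{k ≤ j} r_k⁻¹ strictly increase in j from P_0 = 1, and
ρ_A = 1 / ∑_{j < N} P_j, ρ_B = P_{N−1} / ∑_{j < N} P_j. A strictly increasing sequence of
N terms has sum strictly between N · P_0 and N · P_{N−1}, which gives ρ_A < 1/N < ρ_B.
The case of all r_k > 1 is the order dual.
-/

open Finset

section Monotone

variable {M : Type*} [AddCommMonoid M] [PartialOrder M] [IsOrderedCancelAddMonoid M]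
  {P : ℕ → M} {n : ℕ}

theorem card_nsmul_lt_sum_range_of_strictMonoOn (hn : 0 < n) (hP : StrictMonoOn P (Set.Iic n)) :
    (n + 1) • P 0 < ∑ j ∈ range (n + 1), P j :=
  calc (n + 1) • P 0 = ∑ _j ∈ range (n + 1), P 0 := by simp
    _ < ∑ j ∈ range (n + 1), P j :=
      sum_lt_sum (fun j hj => hP.monotoneOn (by simp) (by simpa [Nat.lt_succ_iff] using hj)
        (Nat.zero_le j)) ⟨n, self_mem_range_succ n, hP (by simp) (by simp) hn⟩

theorem sum_range_lt_card_nsmul_of_strictMonoOn (hn : 0 < n) (hP : StrictMonoOn P (Set.Iic n)) :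
    ∑ j ∈ range (n + 1), P j < (n + 1) • P n :=
  calc ∑ j ∈ range (n + 1), P j < ∑ _j ∈ range (n + 1), P n :=
      sum_lt_sum (fun j hj => hP.monotoneOn (by simpa [Nat.lt_succ_iff] using hj) (by simp)
        (by simpa [Nat.lt_succ_iff] using hj)) ⟨0, by simp, hP (by simp) (by simp) hn⟩
    _ = (n + 1) • P n := by simp

end Monotone

section CumulativeProduct

variable {R : Type*} [CommSemiring R] [PartialOrder R] [IsStrictOrderedRing R]
  {q : ℕ → R} {n : ℕ}

theorem strictMonoOn_prod_Icc (hq : ∀ k ∈ Icc 1 n, 1 < q k) :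
    StrictMonoOn (fun j => ∏ k ∈ Icc 1 j, q k) (Set.Iic n) := by
  refine strictMonoOn_Iic_of_lt_succ fun m hm => ?_
  have hpos : 0 < ∏ k ∈ Icc 1 m, q k :=
    prod_pos fun k hk => zero_lt_one.trans (hq k (by simp at hk ⊢; omega))
  simp only [Order.succ_eq_add_one, prod_Icc_succ_top (Nat.le_add_left 1 m)]
  exact lt_mul_of_one_lt_right hpos (hq (m + 1) (by simp; omega))

theorem strictAntiOn_prod_Icc (hq : ∀ k ∈ Icc 1 n, 0 < q k ∧ q k < 1) :
    StrictAntiOn (fun j => ∏ k ∈ Icc 1 j, q k) (Set.Iic n) := by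
  refine strictAntiOn_Iic_of_succ_lt fun m hm => ?_
  have hpos : 0 < ∏ k ∈ Icc 1 m, q k :=
    prod_pos fun k hk => (hq k (by simp at hk ⊢; omega)).1
  simp only [Order.succ_eq_add_one, prod_Icc_succ_top (Nat.le_add_left 1 m)]
  exact mul_lt_of_lt_one_right hpos (hq (m + 1) (by simp; omega)).2

end CumulativeProduct

theorem one_add_sum_Icc_eq_sum_range {M : Type*} [AddCommMonoid M] [One M] {F : ℕ → M}
    (hF : F 0 = 1) (n : ℕ) : 1 + ∑ j ∈ Icc 1 n, F j = ∑ j ∈ range (n + 1), F j := by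
  rw [Nat.range_succ_eq_Icc_zero, ← add_sum_Ioc_eq_sum_Icc n.zero_le, hF,
    ← Icc_add_one_left_eq_Ioc, zero_add]

/-- The population has size `n + 1`, so `π 1` and `1 - π n` are ρ_A and ρ_B. -/
def IsFixationProbability (r π : ℕ → ℝ) (n : ℕ) : Prop :=
  ∀ i, 1 ≤ i → i ≤ n →
    π i = (1 + ∑ j ∈ Icc 1 (i - 1), ∏ k ∈ Icc 1 j, (r k)⁻¹) /
      (1 + ∑ j ∈ Icc 1 n, ∏ k ∈ Icc 1 j, (r k)⁻¹)

namespace IsFixationProbability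

variable {r π : ℕ → ℝ} {n : ℕ}

theorem apply_one_eq (hπ : IsFixationProbability r π n) (hn : 1 ≤ n) :
    π 1 = 1 / ∑ j ∈ range (n + 1), ∏ k ∈ Icc 1 j, (r k)⁻¹ := by
  rw [hπ 1 le_rfl hn, ← one_add_sum_Icc_eq_sum_range (by simp)]
  simp

theorem one_sub_apply_last_eq (hπ : IsFixationProbability r π n) (hn : 1 ≤ n)
    (hr : ∀ k ∈ Icc 1 n, 0 < r k) :
    1 - π n = (∏ k ∈ Icc 1 n, (r k)⁻¹) / ∑ j ∈ range (n + 1), ∏ k ∈ Icc 1 j, (r k)⁻¹ := by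
  have hD : 0 < ∑ j ∈ range (n + 1), ∏ k ∈ Icc 1 j, (r k)⁻¹ :=
    sum_pos (fun j hj => prod_pos fun k hk =>
      inv_pos.2 (hr k (by simp at hj hk ⊢; omega)))
      nonempty_range_add_one
  obtain ⟨m, rfl⟩ : ∃ m, n = m + 1 := ⟨n - 1, by omega⟩
  rw [hπ _ hn le_rfl, Nat.add_sub_cancel, one_add_sum_Icc_eq_sum_range (by simp),
    one_add_sum_Icc_eq_sum_range (by simp), eq_div_iff hD.ne', sub_mul, one_mul,
    div_mul_cancel₀ _ hD.ne', sum_range_succ _ (m + 1), add_sub_cancel_left]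

theorem bounds_of_lt_one (hπ : IsFixationProbability r π n) (hn : 1 ≤ n)
    (hr : ∀ k ∈ Icc 1 n, 0 < r k ∧ r k < 1) :
    π 1 < 1 / (n + 1) ∧ 1 / (n + 1) < 1 - π n := by
  have hmono := strictMonoOn_prod_Icc fun k hk => (one_lt_inv₀ (hr k hk).1).2 (hr k hk).2
  have hfirst := card_nsmul_lt_sum_range_of_strictMonoOn hn hmono
  have hlast := sum_range_lt_card_nsmul_of_strictMonoOn hn hmono
  simp only [nsmul_eq_mul, Nat.cast_add_one, Icc_eq_empty_of_lt zero_lt_one, prod_empty,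
    mul_one] at hfirst hlast
  rw [hπ.apply_one_eq hn, hπ.one_sub_apply_last_eq hn fun k hk => (hr k hk).1]
  constructor
  · exact one_div_lt_one_div_of_lt (by positivity) hfirst
  · rw [div_lt_div_iff₀ (by positivity) (by linarith)]
    linarith

theorem bounds_of_one_lt (hπ : IsFixationProbability r π n) (hn : 1 ≤ n)
    (hr : ∀ k ∈ Icc 1 n, 1 < r k) :
    1 / (n + 1) < π 1 ∧ 1 - π n < 1 / (n + 1) := by
  have hr0 : ∀ k ∈ Icc 1 n, 0 < r k := fun k hk => zero_lt_one.trans (hr k hk)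
  have hanti := strictAntiOn_prod_Icc fun k hk =>
    ⟨inv_pos.2 (hr0 k hk), inv_lt_one_of_one_lt₀ (hr k hk)⟩
  have hfirst :
      ∑ j ∈ range (n + 1), ∏ k ∈ Icc 1 j, (r k)⁻¹ < (n + 1) • ∏ k ∈ Icc 1 0, (r k)⁻¹ :=
    card_nsmul_lt_sum_range_of_strictMonoOn (M := ℝᵒᵈ) hn hanti.dual_right
  have hlast :
      (n + 1) • ∏ k ∈ Icc 1 n, (r k)⁻¹ < ∑ j ∈ range (n + 1), ∏ k ∈ Icc 1 j, (r k)⁻¹ :=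
    sum_range_lt_card_nsmul_of_strictMonoOn (M := ℝᵒᵈ) hn hanti.dual_right
  have hPn : 0 < ∏ k ∈ Icc 1 n, (r k)⁻¹ := prod_pos fun k hk => inv_pos.2 (hr0 k hk)
  simp only [nsmul_eq_mul, Nat.cast_add_one, Icc_eq_empty_of_lt zero_lt_one, prod_empty,
    mul_one] at hfirst hlast
  rw [hπ.apply_one_eq hn, hπ.one_sub_apply_last_eq hn hr0]
  constructor
  · exact one_div_lt_one_div_of_lt (by nlinarith) hfirst
  · rw [div_lt_div_iff₀ (by nlinarith) (by positivity)]
    linarith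

end IsFixationProbability

theorem affine_neg_of_neg_of_neg {R : Type*} [CommRing R] [LinearOrder R]
    [IsStrictOrderedRing R] {α β p q x : R} (hp : α * p + β < 0) (hq : α * q + β < 0)
    (hpx : p ≤ x) (hxq : x ≤ q) : α * x + β < 0 := by
  rcases le_total 0 α with hα | hα
  · nlinarith [mul_le_mul_of_nonneg_left hxq hα]
  · nlinarith [mul_le_mul_of_nonpos_left hpx hα]

section Fitness

variable (N a b c d w : ℝ)

noncomputable def fitnessA (x : ℝ) : ℝ :=
  1 - w + w * (a * (x - 1) / (N - 1) + b * (N - x) / (N - 1))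

noncomputable def fitnessB (x : ℝ) : ℝ :=
  1 - w + w * (c * x / (N - 1) + d * (N - x - 1) / (N - 1))

variable {N a b c d w}

theorem fitnessB_pos (hN : 1 < N) (hc : 0 < c) (hd : 0 ≤ d) (hw0 : 0 ≤ w) (hw1 : w ≤ 1)
    {x : ℝ} (hx0 : 0 < x) (hxN : x ≤ N - 1) : 0 < fitnessB N c d w x := by
  have hpayoff : 0 < c * x / (N - 1) + d * (N - x - 1) / (N - 1) := by
    have : 0 ≤ N - x - 1 := by linarith
    have : 0 < N - 1 := by linarith
    positivity
  unfold fitnessB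
  rcases hw1.lt_or_eq with hw1 | rfl
  · nlinarith [mul_nonneg hw0 hpayoff.le]
  · simpa using hpayoff

theorem fitnessA_sub_fitnessB (x : ℝ) :
    fitnessA N a b w x - fitnessB N c d w x =
      w * (a - b - c + d) / (N - 1) * x + w * (b * N - a - d * N + d) / (N - 1) := by
  unfold fitnessA fitnessB
  ring

theorem fitnessA_lt_fitnessB_of_endpoints {p q x : ℝ}
    (hp : fitnessA N a b w p < fitnessB N c d w p) (hq : fitnessA N a b w q < fitnessB N c d w q)
    (hpx : p ≤ x) (hxq : x ≤ q) : fitnessA N a b w x < fitnessB N c d w x := by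
  rw [← sub_neg, fitnessA_sub_fitnessB] at hp hq ⊢
  exact affine_neg_of_neg_of_neg hp hq hpx hxq

theorem fitnessB_lt_fitnessA_of_endpoints {p q x : ℝ}
    (hp : fitnessB N c d w p < fitnessA N a b w p) (hq : fitnessB N c d w q < fitnessA N a b w q)
    (hpx : p ≤ x) (hxq : x ≤ q) : fitnessB N c d w x < fitnessA N a b w x := by
  rw [← sub_pos, fitnessA_sub_fitnessB] at hp hq ⊢
  have := affine_neg_of_neg_of_neg (α := -(w * (a - b - c + d) / (N - 1)))
    (β := -(w * (b * N - a - d * N + d) / (N - 1))) (by linarith) (by linarith) hpx hxq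
  linarith

end Fitness

theorem moran_dominance_scenarios_general
    (N : ℕ) (hN : 3 ≤ N) (a b c d w : ℝ)
    (hc : 0 < c) (hd : 0 < d)
    (hw0 : 0 ≤ w) (hw1 : w ≤ 1)
    (r : ℕ → ℝ)
    (hr : ∀ i, 1 ≤ i → i ≤ N - 1 →
      r i = (1 - w + w * (a * ((i : ℝ) - 1) / ((N : ℝ) - 1) +
                b * ((N : ℝ) - (i : ℝ)) / ((N : ℝ) - 1))) /
            (1 - w + w * (c * (i : ℝ) / ((N : ℝ) - 1) +
                d * ((N : ℝ) - (i : ℝ) - 1) / ((N : ℝ) - 1))))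
    (hrpos : ∀ i, 1 ≤ i → i ≤ N - 1 → 0 < r i)
    (π : ℕ → ℝ)
    (hπ : ∀ i, 1 ≤ i → i ≤ N - 1 →
      π i = (1 + ∑ j ∈ Finset.Icc 1 (i - 1), ∏ k ∈ Finset.Icc 1 j, (r k)⁻¹) /
            (1 + ∑ j ∈ Finset.Icc 1 (N - 1), ∏ k ∈ Finset.Icc 1 j, (r k)⁻¹)) :
    (r 1 < 1 → r (N - 1) < 1 → π 1 < 1 / (N : ℝ) ∧ 1 / (N : ℝ) < 1 - π (N - 1)) ∧
    (1 < r 1 → 1 < r (N - 1) → 1 / (N : ℝ) < π 1 ∧ 1 - π (N - 1) < 1 / (N : ℝ)) := by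
  obtain ⟨n, rfl⟩ : ∃ n, N = n + 1 := ⟨N - 1, by omega⟩
  simp only [Nat.add_sub_cancel, Nat.cast_add_one] at hr hrpos hπ ⊢
  have hn : 1 ≤ n := by omega
  have h1 : 1 ∈ Icc 1 n := mem_Icc.2 ⟨le_rfl, hn⟩
  have hn' : n ∈ Icc 1 n := mem_Icc.2 ⟨hn, le_rfl⟩
  have hcast : ∀ k ∈ Icc 1 n, ((1 : ℕ) : ℝ) ≤ k ∧ (k : ℝ) ≤ n := fun k hk =>
    ⟨Nat.cast_le.2 (mem_Icc.1 hk).1, Nat.cast_le.2 (mem_Icc.1 hk).2⟩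
  have hB : ∀ k ∈ Icc 1 n, 0 < fitnessB (n + 1) c d w k := fun k hk =>
    fitnessB_pos (by linarith [(Nat.one_le_cast (α := ℝ)).2 hn]) hc hd.le hw0 hw1
      (Nat.cast_pos.2 (mem_Icc.1 hk).1) (by linarith [(hcast k hk).2])
  have hrk : ∀ k ∈ Icc 1 n, r k = fitnessA (n + 1) a b w k / fitnessB (n + 1) c d w k :=
    fun k hk => hr k (mem_Icc.1 hk).1 (mem_Icc.1 hk).2
  have hlt : ∀ k ∈ Icc 1 n, r k < 1 ↔ fitnessA (n + 1) a b w k < fitnessB (n + 1) c d w k :=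
    fun k hk => by rw [hrk k hk, div_lt_one (hB k hk)]
  have hgt : ∀ k ∈ Icc 1 n, 1 < r k ↔ fitnessB (n + 1) c d w k < fitnessA (n + 1) a b w k :=
    fun k hk => by rw [hrk k hk, one_lt_div (hB k hk)]
  constructor
  · intro hr1 hrn
    refine IsFixationProbability.bounds_of_lt_one hπ hn fun k hk =>
      ⟨hrpos k (mem_Icc.1 hk).1 (mem_Icc.1 hk).2, (hlt k hk).2 ?_⟩
    exact fitnessA_lt_fitnessB_of_endpoints ((hlt 1 h1).1 hr1) ((hlt n hn').1 hrn)
      (hcast k hk).1 (hcast k hk).2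
  · intro hr1 hrn
    refine IsFixationProbability.bounds_of_one_lt hπ hn fun k hk => (hgt k hk).2 ?_
    exact fitnessB_lt_fitnessA_of_endpoints ((hgt 1 h1).1 hr1) ((hgt n hn').1 hrn)
      (hcast k hk).1 (hcast k hk).2

/-- dominance scenarios: if r_1 < 1 and r_{N-1} < 1 then
ρ_A < 1/N and ρ_B > 1/N; dually, if r_1 > 1 and r_{N-1} > 1 then
ρ_A > 1/N and ρ_B < 1/N. -/
theorem moran_dominance_scenarios
    (N : ℕ) (hN : 3 ≤ N) (a b c d w : ℝ)
    (ha : 0 < a) (hb : 0 < b) (hc : 0 < c) (hd : 0 < d)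
    (hw0 : 0 ≤ w) (hw1 : w ≤ 1)
    (r : ℕ → ℝ)
    (hr : ∀ i, 1 ≤ i → i ≤ N - 1 →
      r i = (1 - w + w * (a * ((i : ℝ) - 1) / ((N : ℝ) - 1) +
                b * ((N : ℝ) - (i : ℝ)) / ((N : ℝ) - 1))) /
            (1 - w + w * (c * (i : ℝ) / ((N : ℝ) - 1) +
                d * ((N : ℝ) - (i : ℝ) - 1) / ((N : ℝ) - 1))))
    (hrpos : ∀ i, 1 ≤ i → i ≤ N - 1 → 0 < r i)
    (π : ℕ → ℝ) (hπ0 : π 0 = 0) (hπN : π N = 1)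
    (hπ : ∀ i, 1 ≤ i → i ≤ N - 1 →
      π i = (1 + ∑ j ∈ Finset.Icc 1 (i - 1), ∏ k ∈ Finset.Icc 1 j, (r k)⁻¹) /
            (1 + ∑ j ∈ Finset.Icc 1 (N - 1), ∏ k ∈ Finset.Icc 1 j, (r k)⁻¹)) :
    (r 1 < 1 → r (N - 1) < 1 → π 1 < 1 / (N : ℝ) ∧ 1 / (N : ℝ) < 1 - π (N - 1)) ∧
    (1 < r 1 → 1 < r (N - 1) → 1 / (N : ℝ) < π 1 ∧ 1 - π (N - 1) < 1 / (N : ℝ)) :=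
  moran_dominance_scenarios_general N hN a b c d w hc hd hw0 hw1 r hr hrpos π hπ
end

section
/- If r_1 < 1 and r_{N−1} > 1, then ρ_A > 1/N and ρ_B > 1/N cannot both hold (the evolutionary scenario B, top arrows ←→, bottom arrows ⇒⇐, is forbidden). -/
set_option maxHeartbeats 1000000


/-- if r_1 < 1 and r_{N-1} > 1 then ρ_A > 1/N and ρ_B > 1/N
cannot both hold. -/
theorem moran_bistable_forbidden_scenario
    (N : ℕ) (hN : 3 ≤ N) (a b c d w : ℝ)
    (ha : 0 < a) (hb : 0 < b) (hc : 0 < c) (hd : 0 < d)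
    (hw0 : 0 ≤ w) (hw1 : w ≤ 1)
    (r : ℕ → ℝ)
    (hr : ∀ i, 1 ≤ i → i ≤ N - 1 →
      r i = (1 - w + w * (a * ((i : ℝ) - 1) / ((N : ℝ) - 1) +
                b * ((N : ℝ) - (i : ℝ)) / ((N : ℝ) - 1))) /
            (1 - w + w * (c * (i : ℝ) / ((N : ℝ) - 1) +
                d * ((N : ℝ) - (i : ℝ) - 1) / ((N : ℝ) - 1))))
    (hrpos : ∀ i, 1 ≤ i → i ≤ N - 1 → 0 < r i)
    (π : ℕ → ℝ) (hπ0 : π 0 = 0) (hπN : π N = 1)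
    (hπ : ∀ i, 1 ≤ i → i ≤ N - 1 →
      π i = (1 + ∑ j ∈ Finset.Icc 1 (i - 1), ∏ k ∈ Finset.Icc 1 j, (r k)⁻¹) /
            (1 + ∑ j ∈ Finset.Icc 1 (N - 1), ∏ k ∈ Finset.Icc 1 j, (r k)⁻¹))
    (hr1 : r 1 < 1) (hrN1 : 1 < r (N - 1)) :
    ¬(1 / (N : ℝ) < π 1 ∧ 1 / (N : ℝ) < 1 - π (N - 1)) := by
  rintro ⟨hA, hB⟩
  have hN3 : (3:ℝ) ≤ (N:ℝ) := by exact_mod_cast hN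
  have hN1 : (0:ℝ) < (N:ℝ) - 1 := by linarith
  have hNpos : (0:ℝ) < (N:ℝ) := by linarith
  have hcast : ∀ i : ℕ, i ≤ N - 1 → (i:ℝ) ≤ (N:ℝ) - 1 := by
    intro i h2
    have h : (i:ℝ) ≤ ((N-1:ℕ):ℝ) := by exact_mod_cast h2
    rwa [Nat.cast_sub (by omega), Nat.cast_one] at h
  -- denominators positive
  have hden : ∀ x : ℝ, 1 ≤ x → x ≤ (N:ℝ) - 1 →
      0 < 1 - w + w * (c * x / ((N:ℝ) - 1) + d * ((N:ℝ) - x - 1) / ((N:ℝ) - 1)) := by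
    intro x h1 h2
    have hE : 0 < c * x / ((N:ℝ) - 1) + d * ((N:ℝ) - x - 1) / ((N:ℝ) - 1) :=
      add_pos_of_pos_of_nonneg
        (div_pos (mul_pos hc (by linarith)) hN1)
        (div_nonneg (mul_nonneg hd.le (by linarith)) hN1.le)
    rcases hw0.eq_or_lt with h | h
    · rw [← h]; norm_num
    · nlinarith [mul_pos h hE]
  -- w is positive (otherwise r 1 = 1)
  have hw : 0 < w := by
    rcases hw0.eq_or_lt with h | h
    · exfalso
      rw [hr 1 le_rfl (by omega), ← h] at hr1
      norm_num at hr1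
    · exact h
  -- key sign characterization
  have hkey : ∀ i : ℕ, 1 ≤ i → i ≤ N - 1 →
      (1 ≤ r i ↔ 0 ≤ (a - b - c + d) * (i:ℝ) + (b*(N:ℝ) - a - d*(N:ℝ) + d)) := by
    intro i h1 h2
    have hi1 : (1:ℝ) ≤ (i:ℝ) := by exact_mod_cast h1
    have hi2 := hcast i h2
    have hdp := hden (i:ℝ) hi1 hi2
    rw [hr i h1 h2, le_div_iff₀ hdp, one_mul]
    have hdiff : ((N:ℝ) - 1) *
        ((1 - w + w * (a * ((i:ℝ) - 1) / ((N:ℝ) - 1) + b * ((N:ℝ) - (i:ℝ)) / ((N:ℝ) - 1)))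
        - (1 - w + w * (c * (i:ℝ) / ((N:ℝ) - 1) + d * ((N:ℝ) - (i:ℝ) - 1) / ((N:ℝ) - 1))))
        = w * ((a - b - c + d) * (i:ℝ) + (b*(N:ℝ) - a - d*(N:ℝ) + d)) := by
      field_simp
      ring
    constructor
    · intro h
      have h0 : 0 ≤ w * ((a - b - c + d) * (i:ℝ) + (b*(N:ℝ) - a - d*(N:ℝ) + d)) := by
        rw [← hdiff]; exact mul_nonneg hN1.le (by linarith)
      nlinarith [h0, hw]
    · intro h
      have h0 : 0 ≤ w * ((a - b - c + d) * (i:ℝ) + (b*(N:ℝ) - a - d*(N:ℝ) + d)) :=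
        mul_nonneg hw.le h
      rw [← hdiff] at h0
      nlinarith [hN1]
  -- slope is positive
  have hL1 : (a - b - c + d) * 1 + (b*(N:ℝ) - a - d*(N:ℝ) + d) < 0 := by
    by_contra hcon
    push_neg at hcon
    have h1 := (hkey 1 le_rfl (by omega)).mpr (by push_cast; linarith)
    linarith
  have hLN : 0 ≤ (a - b - c + d) * ((N:ℝ) - 1) + (b*(N:ℝ) - a - d*(N:ℝ) + d) := by
    have h2 := (hkey (N-1) (by omega) le_rfl).mp hrN1.le
    rwa [Nat.cast_sub (by omega : 1 ≤ N), Nat.cast_one] at h2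
  have hαstep : 0 < (a - b - c + d) * ((N:ℝ) - 2) := by nlinarith [hL1, hLN]
  have hα : 0 < a - b - c + d := by
    by_contra hcon
    push_neg at hcon
    nlinarith [mul_nonneg (neg_nonneg.mpr hcon) (by linarith : (0:ℝ) ≤ (N:ℝ) - 2)]
  -- monotonicity of the sign of r - 1
  have hmono : ∀ i j : ℕ, 1 ≤ i → i ≤ j → j ≤ N - 1 → 1 ≤ r i → 1 ≤ r j := by
    intro i j h1 hij h2 hri
    rw [hkey i h1 (le_trans hij h2)] at hri
    rw [hkey j (le_trans h1 hij) h2]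
    have hijR : (i:ℝ) ≤ (j:ℝ) := by exact_mod_cast hij
    nlinarith [mul_le_mul_of_nonneg_left hijR hα.le]
  -- products
  set Q : ℕ → ℝ := fun j => ∏ k ∈ Finset.Icc 1 j, (r k)⁻¹ with hQ
  have hQpos : ∀ j : ℕ, j ≤ N - 1 → 0 < Q j := by
    intro j hj
    apply Finset.prod_pos
    intro k hk
    rw [Finset.mem_Icc] at hk
    exact inv_pos.mpr (hrpos k hk.1 (le_trans hk.2 hj))
  have hQ1 : 1 < Q 1 := by
    have : Q 1 = (r 1)⁻¹ := by simp [hQ]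
    rw [this]
    exact (one_lt_inv₀ (hrpos 1 le_rfl (by omega))).mpr hr1
  -- unimodality lower bound
  have hQlb : ∀ j : ℕ, 1 ≤ j → j ≤ N - 1 → min 1 (Q (N-1)) ≤ Q j := by
    intro j h1 h2
    by_cases hex : ∃ k, k ∈ Finset.Icc 1 j ∧ 1 ≤ r k
    · obtain ⟨k0, hk0, hrk0⟩ := hex
      rw [Finset.mem_Icc] at hk0
      have hfact : ∀ k ∈ Finset.Icc (j+1) (N-1), (r k)⁻¹ ≤ 1 := by
        intro k hk
        rw [Finset.mem_Icc] at hk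
        have h1k : 1 ≤ r k := hmono k0 k hk0.1 (by omega) hk.2 hrk0
        exact (inv_le_one₀ (hrpos k (by omega) hk.2)).mpr h1k
      have hprod_le : (∏ k ∈ Finset.Icc (j+1) (N-1), (r k)⁻¹) ≤ 1 :=
        Finset.prod_le_one
          (fun k hk => by
            rw [Finset.mem_Icc] at hk
            exact (inv_pos.mpr (hrpos k (by omega) hk.2)).le)
          hfact
      have hsplit : Q j * (∏ k ∈ Finset.Icc (j+1) (N-1), (r k)⁻¹) = Q (N-1) := by
        simp only [hQ]
        rw [show Finset.Icc 1 j = Finset.Ioc 0 j from Finset.Icc_add_one_left_eq_Ioc 0 j,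
            show Finset.Icc (j+1) (N-1) = Finset.Ioc j (N-1) from Finset.Icc_add_one_left_eq_Ioc j (N-1),
            show Finset.Icc 1 (N-1) = Finset.Ioc 0 (N-1) from Finset.Icc_add_one_left_eq_Ioc 0 (N-1)]
        exact Finset.prod_Ioc_consecutive _ (Nat.zero_le j) h2
      have : Q (N-1) ≤ Q j := by
        rw [← hsplit]
        nlinarith [hQpos j h2, hprod_le]
      exact le_trans (min_le_right _ _) this
    · push_neg at hex
      have h1Q : (1:ℝ) ≤ Q j := by
        simp only [hQ]
        calc (1:ℝ) = ∏ k ∈ Finset.Icc 1 j, 1 := by simp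
          _ ≤ ∏ k ∈ Finset.Icc 1 j, (r k)⁻¹ := by
              apply Finset.prod_le_prod (by norm_num)
              intro k hk
              rw [Finset.mem_Icc] at hk
              have hrk := hrpos k hk.1 (le_trans hk.2 h2)
              exact (one_le_inv₀ hrk).mpr (hex k (Finset.mem_Icc.mpr hk)).le
      exact le_trans (min_le_left _ _) h1Q
  -- rewrite π in terms of Q
  have hπ' : ∀ i, 1 ≤ i → i ≤ N - 1 →
      π i = (1 + ∑ j ∈ Finset.Icc 1 (i - 1), Q j) /
            (1 + ∑ j ∈ Finset.Icc 1 (N - 1), Q j) := by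
    intro i h1 h2
    rw [hπ i h1 h2]
  set S := ∑ j ∈ Finset.Icc 1 (N-1), Q j with hS
  have hSnonneg : 0 ≤ S := by
    apply Finset.sum_nonneg
    intro j hj
    rw [Finset.mem_Icc] at hj
    exact (hQpos j hj.2).le
  have hDpos : 0 < 1 + S := by linarith
  -- condition A
  have hπ1 : π 1 = 1 / (1 + S) := by
    rw [hπ' 1 le_rfl (by omega)]
    norm_num
  have hAlt : 1 + S < N := by
    rw [hπ1, div_lt_div_iff₀ hNpos hDpos, one_mul, one_mul] at hA
    exact hA
  -- condition B
  have hsum_split : S = (∑ j ∈ Finset.Icc 1 (N-2), Q j) + Q (N-1) := by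
    rw [hS, show N - 1 = (N-2) + 1 by omega]
    rw [Finset.sum_Icc_succ_top (by omega) Q]
  have hπN1' : π (N-1) = (1 + ∑ j ∈ Finset.Icc 1 (N-2), Q j) / (1 + S) := by
    rw [hπ' (N-1) (by omega) le_rfl, show N - 1 - 1 = N - 2 by omega]
  have hBval : 1 - π (N-1) = Q (N-1) / (1 + S) := by
    rw [hπN1', eq_div_iff hDpos.ne', sub_mul, one_mul,
        div_mul_cancel₀ _ hDpos.ne']
    linarith [hsum_split]
  have hBlt : 1 + S < N * Q (N-1) := by
    rw [hBval, div_lt_div_iff₀ hNpos hDpos, one_mul] at hB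
    linarith
  -- sum decomposition and lower bound
  have hS1 : S = Q 1 + ∑ j ∈ Finset.Ioc 1 (N-1), Q j := by
    rw [hS, show Finset.Icc 1 (N-1) = Finset.Ioc 0 (N-1) from Finset.Icc_add_one_left_eq_Ioc 0 (N-1),
        ← Finset.sum_Ioc_consecutive Q (Nat.zero_le 1) (by omega : 1 ≤ N-1)]
    congr 1
    rw [show Finset.Ioc 0 1 = Finset.Icc 1 1 from (Finset.Icc_add_one_left_eq_Ioc 0 1).symm,
        Finset.Icc_self, Finset.sum_singleton]
  have hcard : (Finset.Ioc 1 (N-1)).card = N - 2 := by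
    rw [Nat.card_Ioc]; omega
  have htail : ((N:ℝ) - 2) * min 1 (Q (N-1)) ≤ ∑ j ∈ Finset.Ioc 1 (N-1), Q j := by
    have h := Finset.card_nsmul_le_sum (Finset.Ioc 1 (N-1)) Q (min 1 (Q (N-1)))
      (fun j hj => by
        rw [Finset.mem_Ioc] at hj
        exact hQlb j (by omega) hj.2)
    rw [hcard, nsmul_eq_mul] at h
    have e : ((N-2:ℕ):ℝ) = (N:ℝ) - 2 := by
      rw [Nat.cast_sub (by omega : 2 ≤ N)]; norm_num
    rwa [e] at h
  have hQN := hQpos (N-1) le_rfl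
  rcases le_or_gt 1 (Q (N-1)) with hcase | hcase
  · rw [min_eq_left hcase] at htail
    linarith [hS1, hQ1, htail, hAlt]
  · rw [min_eq_right hcase.le] at htail
    nlinarith [hS1, hQ1, htail, hBlt, hcase]
end

section
/- If r_1 > 1 and r_{N−1} > 1 (invasion scenario B→→A, hence evolutionary scenario B⇒⇒A), then π_i > i/N for every i ∈ {1,…,N−1}, and the discrete derivative is strictly decreasing: d_i > d_{i+1} for every 1 ≤ i ≤ N−1. -/
/-!
The sign of `r_i - 1` is that of `w (f_i - g_i)`, an affine function of `i`; positive at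
`i = 1` and `i = N - 1`, it is positive throughout, so every `r_i > 1`. The products
`P_j = ∏_{k ≤ j} r_k⁻¹` then strictly decrease, and `π_i = (∑_{j < i} P_j) / ∑_{j < N} P_j`.
Hence `d_i = P_{i-1} / ∑_{j < N} P_j` decreases, and `π_i`, the share of the first `i` terms
of a decreasing sequence in its total, exceeds the share `i / N`.
-/

open Finset

noncomputable section

namespace Moran

theorem affine_pos_of_endpoints {α β p q x : ℝ} (hp : 0 < α * p + β) (hq : 0 < α * q + β)
    (hpx : p ≤ x) (hxq : x ≤ q) : 0 < α * x + β := by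
  rcases le_total 0 α with hα | hα <;> nlinarith

def fitnessA (N a b w x : ℝ) : ℝ := 1 - w + w * (a * (x - 1) / (N - 1) + b * (N - x) / (N - 1))

def fitnessB (N c d w x : ℝ) : ℝ := 1 - w + w * (c * x / (N - 1) + d * (N - x - 1) / (N - 1))

def payoffGap (N a b c d x : ℝ) : ℝ := a * (x - 1) + b * (N - x) - c * x - d * (N - x - 1)

section Fitness

variable {N a b c d w x : ℝ}

theorem fitnessA_sub_fitnessB (hN : N ≠ 1) :
    fitnessA N a b w x - fitnessB N c d w x = w * payoffGap N a b c d x / (N - 1) := by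
  have : N - 1 ≠ 0 := sub_ne_zero.mpr hN
  simp only [fitnessA, fitnessB, payoffGap]
  field_simp
  ring

theorem fitnessB_pos (hc : 0 < c) (hd : 0 ≤ d) (hw0 : 0 ≤ w) (hw1 : w ≤ 1)
    (hx1 : 1 ≤ x) (hxN : x ≤ N - 1) : 0 < fitnessB N c d w x := by
  have hN : 0 < N - 1 := by linarith
  have hpay : 0 < c * x / (N - 1) + d * (N - x - 1) / (N - 1) := by
    have : 0 ≤ d * (N - x - 1) / (N - 1) := div_nonneg (mul_nonneg hd (by linarith)) hN.le
    have : 0 < c * x / (N - 1) := by positivity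
    linarith
  unfold fitnessB
  rcases hw0.eq_or_lt with rfl | hw
  · norm_num
  · nlinarith [mul_pos hw hpay]

theorem one_lt_fitness_ratio_iff (hc : 0 < c) (hd : 0 ≤ d) (hw0 : 0 ≤ w) (hw1 : w ≤ 1)
    (hx1 : 1 ≤ x) (hxN : x ≤ N - 1) :
    1 < fitnessA N a b w x / fitnessB N c d w x ↔ 0 < w * payoffGap N a b c d x := by
  have hN : 0 < N - 1 := by linarith
  rw [one_lt_div (fitnessB_pos hc hd hw0 hw1 hx1 hxN), ← sub_pos,
    fitnessA_sub_fitnessB (by linarith), div_pos_iff_of_pos_right hN]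

theorem one_lt_fitness_ratio_of_endpoints (hc : 0 < c) (hd : 0 ≤ d) (hw0 : 0 ≤ w) (hw1 : w ≤ 1)
    (hN : 2 ≤ N) (h1 : 1 < fitnessA N a b w 1 / fitnessB N c d w 1)
    (hN1 : 1 < fitnessA N a b w (N - 1) / fitnessB N c d w (N - 1))
    (hx1 : 1 ≤ x) (hxN : x ≤ N - 1) :
    1 < fitnessA N a b w x / fitnessB N c d w x := by
  rw [one_lt_fitness_ratio_iff hc hd hw0 hw1 le_rfl (by linarith)] at h1
  rw [one_lt_fitness_ratio_iff hc hd hw0 hw1 (by linarith) le_rfl] at hN1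
  rw [one_lt_fitness_ratio_iff hc hd hw0 hw1 hx1 hxN]
  have affine : ∀ y, w * payoffGap N a b c d y =
      w * (a - b - c + d) * y + w * (b * N - a - d * N + d) := fun y => by
    unfold payoffGap; ring
  rw [affine] at h1 hN1 ⊢
  exact affine_pos_of_endpoints h1 hN1 hx1 hxN

end Fitness

def invRatioProd (r : ℕ → ℝ) (j : ℕ) : ℝ := ∏ k ∈ Icc 1 j, (r k)⁻¹

section InvRatioProd

variable {r : ℕ → ℝ} {n : ℕ}

theorem invRatioProd_zero : invRatioProd r 0 = 1 := by
  simp [invRatioProd]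

theorem invRatioProd_succ (j : ℕ) : invRatioProd r (j + 1) = invRatioProd r j * (r (j + 1))⁻¹ :=
  prod_Icc_succ_top (by omega) _

theorem invRatioProd_pos (hr : ∀ k, 1 ≤ k → k < n → 0 < r k) {j : ℕ} (hj : j < n) :
    0 < invRatioProd r j :=
  prod_pos fun k hk => inv_pos.2 (hr k (mem_Icc.1 hk).1 (by grind))

theorem invRatioProd_strictAntiOn (hr : ∀ k, 1 ≤ k → k < n → 1 < r k) :
    StrictAntiOn (invRatioProd r) (Set.Iio n) := by
  have h : StrictAntiOn (invRatioProd r) (Set.Iic (n - 1)) := by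
    refine strictAntiOn_Iic_of_succ_lt fun j hj => ?_
    rw [Order.succ_eq_add_one, invRatioProd_succ]
    exact mul_lt_of_lt_one_right
      (invRatioProd_pos (fun k hk1 hkn => one_pos.trans (hr k hk1 hkn)) (by omega))
      (inv_lt_one_of_one_lt₀ (hr _ (by omega) (by omega)))
  intro i hi j hj hij
  simp only [Set.mem_Iio] at hi hj
  exact h (Set.mem_Iic.2 (by omega)) (Set.mem_Iic.2 (by omega)) hij

theorem sum_range_invRatioProd {i : ℕ} (hi : 1 ≤ i) :
    ∑ j ∈ range i, invRatioProd r j = 1 + ∑ j ∈ Icc 1 (i - 1), invRatioProd r j := by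
  obtain ⟨m, rfl⟩ : ∃ m, i = m + 1 := ⟨i - 1, by omega⟩
  rw [sum_range_eq_add_Ico _ (by omega), invRatioProd_zero, Nat.add_sub_cancel,
    Ico_add_one_right_eq_Icc]

theorem sum_range_invRatioProd_pos (hr : ∀ k, 1 ≤ k → k < n → 0 < r k) (hn : 0 < n) :
    0 < ∑ j ∈ range n, invRatioProd r j :=
  sum_pos (fun _ hj => invRatioProd_pos hr (mem_range.1 hj)) (nonempty_range_iff.2 hn.ne')

end InvRatioProd

theorem mul_sum_range_lt_of_strictAntiOn {P : ℕ → ℝ} {i n : ℕ} (hP : StrictAntiOn P (Set.Iio n))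
    (hi : 0 < i) (hin : i < n) :
    (i : ℝ) * ∑ j ∈ range n, P j < n * ∑ j ∈ range i, P j := by
  have hsplit : ∑ j ∈ range n, P j = ∑ j ∈ range i, P j + ∑ j ∈ Ico i n, P j :=
    (sum_range_add_sum_Ico P hin.le).symm
  have hhead : (i : ℝ) * P (i - 1) ≤ ∑ j ∈ range i, P j := by
    simpa using card_nsmul_le_sum (range i) P (P (i - 1)) fun j hj =>
      hP.antitoneOn (by simp at hj ⊢; omega) (by simp; omega) (by simp at hj; omega)
  have htail : ∑ j ∈ Ico i n, P j ≤ ((n : ℝ) - i) * P i := by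
    simpa [Nat.cast_sub hin.le] using sum_le_card_nsmul (Ico i n) P (P i) fun j hj =>
      hP.antitoneOn (by simp; omega) (by simp at hj ⊢; omega) (by simp at hj; omega)
  have hstep : P i < P (i - 1) := hP (by simp; omega) (by simp; omega) (by omega)
  have hi' : (0 : ℝ) < i := by exact_mod_cast hi
  have hni : (0 : ℝ) < n - i := by
    have : (i : ℝ) < n := by exact_mod_cast hin
    linarith
  rw [hsplit]
  nlinarith [mul_lt_mul_of_pos_left hstep (mul_pos hi' hni)]

theorem fixation_eq_sum_range_div {N : ℕ} (hN : 1 ≤ N) {r : ℕ → ℝ}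
    (hr : ∀ k, 1 ≤ k → k < N → 0 < r k) {π : ℕ → ℝ} (hπ0 : π 0 = 0) (hπN : π N = 1)
    (hπ : ∀ i, 1 ≤ i → i ≤ N - 1 → π i = (1 + ∑ j ∈ Icc 1 (i - 1), invRatioProd r j) /
      (1 + ∑ j ∈ Icc 1 (N - 1), invRatioProd r j))
    (i : ℕ) (hi : i ≤ N) :
    π i = (∑ j ∈ range i, invRatioProd r j) / ∑ j ∈ range N, invRatioProd r j := by
  have hD := sum_range_invRatioProd_pos hr hN
  rcases Nat.eq_zero_or_pos i with rfl | hi0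
  · simp [hπ0]
  rcases hi.eq_or_lt with rfl | hiN
  · rw [hπN, div_self hD.ne']
  rw [hπ i hi0 (by omega), sum_range_invRatioProd hi0, sum_range_invRatioProd hN]

end Moran

end

open Moran in
theorem moran_graph_shape_A_dominates_B_general
    (N : ℕ) (hN : 3 ≤ N) (a b c d w : ℝ)
    (hc : 0 < c) (hd : 0 < d)
    (hw0 : 0 ≤ w) (hw1 : w ≤ 1)
    (r : ℕ → ℝ)
    (hr : ∀ i, 1 ≤ i → i ≤ N - 1 →
      r i = (1 - w + w * (a * ((i : ℝ) - 1) / ((N : ℝ) - 1) +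
                b * ((N : ℝ) - (i : ℝ)) / ((N : ℝ) - 1))) /
            (1 - w + w * (c * (i : ℝ) / ((N : ℝ) - 1) +
                d * ((N : ℝ) - (i : ℝ) - 1) / ((N : ℝ) - 1))))
    (π : ℕ → ℝ) (hπ0 : π 0 = 0) (hπN : π N = 1)
    (hπ : ∀ i, 1 ≤ i → i ≤ N - 1 →
      π i = (1 + ∑ j ∈ Finset.Icc 1 (i - 1), ∏ k ∈ Finset.Icc 1 j, (r k)⁻¹) /
            (1 + ∑ j ∈ Finset.Icc 1 (N - 1), ∏ k ∈ Finset.Icc 1 j, (r k)⁻¹))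
    (dd : ℕ → ℝ) (hdd : ∀ i, 1 ≤ i → i ≤ N → dd i = π i - π (i - 1))
    (hr1 : 1 < r 1) (hrN1 : 1 < r (N - 1)) :
    (∀ i, 1 ≤ i → i ≤ N - 1 → (i : ℝ) / N < π i) ∧
    (∀ i, 1 ≤ i → i ≤ N - 1 → dd (i + 1) < dd i) := by
  have hNR : (3 : ℝ) ≤ N := by exact_mod_cast hN
  rw [hr 1 le_rfl (by omega), Nat.cast_one] at hr1
  rw [hr (N - 1) (by omega) le_rfl, Nat.cast_sub (by omega), Nat.cast_one] at hrN1
  have hr_gt : ∀ k, 1 ≤ k → k < N → 1 < r k := fun k hk1 hkN => by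
    have hkN' : (k : ℝ) ≤ N - 1 := by
      rw [← Nat.cast_one, ← Nat.cast_sub (by omega)]; exact_mod_cast Nat.le_sub_one_of_lt hkN
    rw [hr k hk1 (by omega)]
    exact one_lt_fitness_ratio_of_endpoints hc hd.le hw0 hw1 (by linarith) hr1 hrN1
      (by exact_mod_cast hk1) hkN'
  have hr_pos : ∀ k, 1 ≤ k → k < N → 0 < r k := fun k hk1 hkN => one_pos.trans (hr_gt k hk1 hkN)
  have hfix := fixation_eq_sum_range_div (by omega) hr_pos hπ0 hπN hπ
  have hP := invRatioProd_strictAntiOn hr_gt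
  have hD := sum_range_invRatioProd_pos hr_pos (by omega)
  have hdd' : ∀ i, 1 ≤ i → i ≤ N →
      dd i = invRatioProd r (i - 1) / ∑ j ∈ Finset.range N, invRatioProd r j := by
    intro i hi1 hiN
    obtain ⟨m, rfl⟩ : ∃ m, i = m + 1 := ⟨i - 1, by omega⟩
    rw [hdd _ hi1 hiN, Nat.add_sub_cancel, hfix _ hiN, hfix m (by omega), Finset.sum_range_succ]
    ring
  refine ⟨fun i hi1 hiN => ?_, fun i hi1 hiN => ?_⟩
  · rw [hfix i (by omega), div_lt_div_iff₀ (by positivity) hD, mul_comm _ (N : ℝ)]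
    exact mul_sum_range_lt_of_strictAntiOn hP hi1 (by omega)
  · rw [hdd' (i + 1) (by omega) (by omega), hdd' i hi1 (by omega), Nat.add_sub_cancel]
    exact div_lt_div_of_pos_right (hP (by simp; omega) (by simp; omega) (by omega)) hD

/-- in scenario B→→A (r_1 > 1 and r_{N-1} > 1), π_i > i/N for all
1 ≤ i ≤ N−1, and the discrete derivative is strictly decreasing. -/
theorem moran_graph_shape_A_dominates_B
    (N : ℕ) (hN : 3 ≤ N) (a b c d w : ℝ)
    (ha : 0 < a) (hb : 0 < b) (hc : 0 < c) (hd : 0 < d)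
    (hw0 : 0 ≤ w) (hw1 : w ≤ 1)
    (r : ℕ → ℝ)
    (hr : ∀ i, 1 ≤ i → i ≤ N - 1 →
      r i = (1 - w + w * (a * ((i : ℝ) - 1) / ((N : ℝ) - 1) +
                b * ((N : ℝ) - (i : ℝ)) / ((N : ℝ) - 1))) /
            (1 - w + w * (c * (i : ℝ) / ((N : ℝ) - 1) +
                d * ((N : ℝ) - (i : ℝ) - 1) / ((N : ℝ) - 1))))
    (hrpos : ∀ i, 1 ≤ i → i ≤ N - 1 → 0 < r i)
    (π : ℕ → ℝ) (hπ0 : π 0 = 0) (hπN : π N = 1)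
    (hπ : ∀ i, 1 ≤ i → i ≤ N - 1 →
      π i = (1 + ∑ j ∈ Finset.Icc 1 (i - 1), ∏ k ∈ Finset.Icc 1 j, (r k)⁻¹) /
            (1 + ∑ j ∈ Finset.Icc 1 (N - 1), ∏ k ∈ Finset.Icc 1 j, (r k)⁻¹))
    (dd : ℕ → ℝ) (hdd : ∀ i, 1 ≤ i → i ≤ N → dd i = π i - π (i - 1))
    (hr1 : 1 < r 1) (hrN1 : 1 < r (N - 1)) :
    (∀ i, 1 ≤ i → i ≤ N - 1 → (i : ℝ) / N < π i) ∧
    (∀ i, 1 ≤ i → i ≤ N - 1 → dd (i + 1) < dd i) :=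
  moran_graph_shape_A_dominates_B_general N hN a b c d w hc hd hw0 hw1 r hr π hπ0 hπN hπ dd hdd hr1
    hrN1
end

section
/- If r_1 > 1 and r_{N−1} < 1 (invasion scenario B→←A), then there exists a unique i* ∈ {1,…,N−1} such that d_{i+1} < d_i for every i with 1 ≤ i < i*, d_{i+1} > d_i for every i with i* < i ≤ N−1, and d_{i*+1} ≥ d_{i*} (a unique inflection point of the fixation-probability graph). -/
/-- if r_1 > 1 and r_{N-1} < 1 (invasion scenario B→←A), there is a
unique inflection point i* ∈ {1, …, N−1}: d_{i+1} < d_i for 1 ≤ i < i*,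
d_{i+1} > d_i for i* < i ≤ N−1, and d_{i*+1} ≥ d_{i*}. -/
theorem moran_unique_inflection_mutual_invasion
    (N : ℕ) (hN : 3 ≤ N) (a b c d w : ℝ)
    (ha : 0 < a) (hb : 0 < b) (hc : 0 < c) (hd : 0 < d)
    (hw0 : 0 ≤ w) (hw1 : w ≤ 1)
    (r : ℕ → ℝ)
    (hr : ∀ i, 1 ≤ i → i ≤ N - 1 →
      r i = (1 - w + w * (a * ((i : ℝ) - 1) / ((N : ℝ) - 1) +
                b * ((N : ℝ) - (i : ℝ)) / ((N : ℝ) - 1))) /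
            (1 - w + w * (c * (i : ℝ) / ((N : ℝ) - 1) +
                d * ((N : ℝ) - (i : ℝ) - 1) / ((N : ℝ) - 1))))
    (hrpos : ∀ i, 1 ≤ i → i ≤ N - 1 → 0 < r i)
    (π : ℕ → ℝ) (hπ0 : π 0 = 0) (hπN : π N = 1)
    (hπ : ∀ i, 1 ≤ i → i ≤ N - 1 →
      π i = (1 + ∑ j ∈ Finset.Icc 1 (i - 1), ∏ k ∈ Finset.Icc 1 j, (r k)⁻¹) /
            (1 + ∑ j ∈ Finset.Icc 1 (N - 1), ∏ k ∈ Finset.Icc 1 j, (r k)⁻¹))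
    (dd : ℕ → ℝ) (hdd : ∀ i, 1 ≤ i → i ≤ N → dd i = π i - π (i - 1))
    (hr1 : 1 < r 1) (hrN1 : r (N - 1) < 1) :
    ∃! istar : ℕ, (1 ≤ istar ∧ istar ≤ N - 1) ∧
      (∀ i, 1 ≤ i → i < istar → dd (i + 1) < dd i) ∧
      (∀ i, istar < i → i ≤ N - 1 → dd i < dd (i + 1)) ∧
      dd istar ≤ dd (istar + 1) := by
  classical
  have hNR : (3:ℝ) ≤ (N:ℝ) := by exact_mod_cast hN
  have hNpos : (0:ℝ) < (N:ℝ) - 1 := by linarith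
  have hNne : (N:ℝ) - 1 ≠ 0 := ne_of_gt hNpos
  have hcast : ((N - 1 : ℕ) : ℝ) = (N:ℝ) - 1 := by
    have h1 : (1:ℕ) ≤ N := by omega
    push_cast [Nat.cast_sub h1]
    ring
  -- denominator positivity
  have hden : ∀ i : ℕ, 1 ≤ i → i ≤ N - 1 →
      0 < 1 - w + w * (c * (i:ℝ) / ((N:ℝ)-1) + d * ((N:ℝ) - (i:ℝ) - 1) / ((N:ℝ)-1)) := by
    intro i h1 h2
    have hiN : (i:ℝ) ≤ (N:ℝ) - 1 := by rw [← hcast]; exact_mod_cast h2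
    have h1R : (1:ℝ) ≤ (i:ℝ) := by exact_mod_cast h1
    have hX1 : 0 < c * (i:ℝ) / ((N:ℝ)-1) := div_pos (mul_pos hc (by linarith)) hNpos
    have hX2 : 0 ≤ d * ((N:ℝ) - (i:ℝ) - 1) / ((N:ℝ)-1) :=
      div_nonneg (mul_nonneg hd.le (by linarith)) hNpos.le
    rcases eq_or_lt_of_le hw0 with h | h
    · rw [← h]; norm_num
    · nlinarith [mul_pos h (add_pos_of_pos_of_nonneg hX1 hX2)]
  -- affine sign function
  set β : ℝ := w * (a - b - c + d) / ((N:ℝ)-1) with hβdef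
  set C : ℝ := w * (b * (N:ℝ) - a - d * (N:ℝ) + d) / ((N:ℝ)-1) with hCdef
  have hdiff : ∀ i : ℕ,
      (1 - w + w * (a * ((i:ℝ)-1)/((N:ℝ)-1) + b * ((N:ℝ)-(i:ℝ))/((N:ℝ)-1)))
        - (1 - w + w * (c * (i:ℝ)/((N:ℝ)-1) + d * ((N:ℝ)-(i:ℝ)-1)/((N:ℝ)-1)))
        = β * (i:ℝ) + C := by
    intro i
    rw [hβdef, hCdef]
    field_simp
    ring
  have hsign1 : ∀ i, 1 ≤ i → i ≤ N - 1 → (1 < r i ↔ 0 < β * (i:ℝ) + C) := by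
    intro i h1 h2
    rw [hr i h1 h2, one_lt_div (hden i h1 h2), ← sub_pos, hdiff i]
  have hsign2 : ∀ i, 1 ≤ i → i ≤ N - 1 → (r i < 1 ↔ β * (i:ℝ) + C < 0) := by
    intro i h1 h2
    rw [hr i h1 h2, div_lt_one (hden i h1 h2), ← sub_neg, hdiff i]
  have hsign3 : ∀ i, 1 ≤ i → i ≤ N - 1 → (r i ≤ 1 ↔ β * (i:ℝ) + C ≤ 0) := by
    intro i h1 h2
    rw [← not_lt, hsign1 i h1 h2, not_lt]
  -- products and sums
  have hPpos : ∀ j, j ≤ N - 1 → 0 < ∏ k ∈ Finset.Icc 1 j, (r k)⁻¹ := by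
    intro j hj
    apply Finset.prod_pos
    intro k hk
    simp only [Finset.mem_Icc] at hk
    exact inv_pos.mpr (hrpos k hk.1 (le_trans hk.2 hj))
  have hSpos : 0 < 1 + ∑ j ∈ Finset.Icc 1 (N-1), ∏ k ∈ Finset.Icc 1 j, (r k)⁻¹ := by
    have h : 0 ≤ ∑ j ∈ Finset.Icc 1 (N-1), ∏ k ∈ Finset.Icc 1 j, (r k)⁻¹ :=
      Finset.sum_nonneg fun j hj => (hPpos j (Finset.mem_Icc.mp hj).2).le
    linarith
  have hSne : (1 + ∑ j ∈ Finset.Icc 1 (N-1), ∏ k ∈ Finset.Icc 1 j, (r k)⁻¹) ≠ 0 :=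
    ne_of_gt hSpos
  -- generic algebra facts
  have alg1 : ∀ T P S : ℝ, S ≠ 0 → (1 + (T + P)) / S - (1 + T) / S = P / S := by
    intro T P S h
    rw [div_sub_div_same]
    congr 1
    ring
  have alg2 : ∀ T P S : ℝ, S = 1 + (T + P) → S ≠ 0 → 1 - (1 + T) / S = P / S := by
    intro T P S hS h
    field_simp
    rw [hS]
    ring
  -- dd formula
  have hddP : ∀ i, 1 ≤ i → i ≤ N →
      dd i = (∏ k ∈ Finset.Icc 1 (i-1), (r k)⁻¹) /
        (1 + ∑ j ∈ Finset.Icc 1 (N-1), ∏ k ∈ Finset.Icc 1 j, (r k)⁻¹) := by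
    intro i h1 h2
    rw [hdd i h1 h2]
    by_cases hi1 : i = 1
    · subst hi1
      rw [hπ0, hπ 1 le_rfl (by omega)]
      rw [show Finset.Icc 1 0 = (∅ : Finset ℕ) from Finset.Icc_eq_empty (by omega)]
      simp
    · by_cases hiN : i = N
      · rw [hiN]
        rw [hπN, hπ (N-1) (by omega) (by omega)]
        have e1 : N - 1 - 1 = N - 2 := by omega
        have e2 : N - 1 = (N - 2) + 1 := by omega
        rw [e1]
        have hsplit : (1:ℝ) + ∑ j ∈ Finset.Icc 1 (N-1), ∏ k ∈ Finset.Icc 1 j, (r k)⁻¹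
            = 1 + ((∑ j ∈ Finset.Icc 1 (N-2), ∏ k ∈ Finset.Icc 1 j, (r k)⁻¹)
              + ∏ k ∈ Finset.Icc 1 (N-1), (r k)⁻¹) := by
          congr 1
          rw [e2, Finset.sum_Icc_succ_top (a := 1) (b := N-2) (by omega)]
        exact alg2 _ _ _ hsplit hSne
      · have h2' : i ≤ N - 1 := by omega
        rw [hπ i (by omega) h2', hπ (i-1) (by omega) (by omega)]
        have e1 : i - 1 - 1 = i - 2 := by omega
        have e2 : i - 1 = (i - 2) + 1 := by omega
        rw [e1]
        have hsplit : ∑ j ∈ Finset.Icc 1 (i-1), ∏ k ∈ Finset.Icc 1 j, (r k)⁻¹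
            = (∑ j ∈ Finset.Icc 1 (i-2), ∏ k ∈ Finset.Icc 1 j, (r k)⁻¹)
              + ∏ k ∈ Finset.Icc 1 (i-1), (r k)⁻¹ := by
          rw [e2, Finset.sum_Icc_succ_top (a := 1) (b := i-2) (by omega)]
        rw [hsplit]
        exact alg1 _ _ _ hSne
  have hddpos : ∀ i, 1 ≤ i → i ≤ N → 0 < dd i := by
    intro i h1 h2
    rw [hddP i h1 h2]
    exact div_pos (hPpos (i-1) (by omega)) hSpos
  have hstep : ∀ i, 1 ≤ i → i ≤ N - 1 → dd (i+1) = dd i * (r i)⁻¹ := by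
    intro i h1 h2
    rw [hddP (i+1) (by omega) (by omega), hddP i h1 (by omega)]
    have e : (i+1) - 1 = (i-1) + 1 := by omega
    rw [e, Finset.prod_Icc_succ_top (a := 1) (b := i-1) (by omega)]
    have e2 : (i-1) + 1 = i := by omega
    rw [e2]
    ring
  -- comparisons
  have hlt : ∀ i, 1 ≤ i → i ≤ N - 1 → 1 < r i → dd (i+1) < dd i := by
    intro i h1 h2 hri
    rw [hstep i h1 h2]
    have hp := hddpos i h1 (by omega)
    have hrp := hrpos i h1 h2
    have hinv : (r i)⁻¹ < 1 := inv_lt_one_of_one_lt₀ hri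
    nlinarith
  have hgt : ∀ i, 1 ≤ i → i ≤ N - 1 → r i < 1 → dd i < dd (i+1) := by
    intro i h1 h2 hri
    rw [hstep i h1 h2]
    have hp := hddpos i h1 (by omega)
    have hrp := hrpos i h1 h2
    have hinv : 1 < (r i)⁻¹ := (one_lt_inv₀ hrp).2 hri
    nlinarith
  have hle : ∀ i, 1 ≤ i → i ≤ N - 1 → r i ≤ 1 → dd i ≤ dd (i+1) := by
    intro i h1 h2 hri
    rw [hstep i h1 h2]
    have hp := hddpos i h1 (by omega)
    have hrp := hrpos i h1 h2
    have hc1 : (r i)⁻¹ * r i = 1 := inv_mul_cancel₀ (ne_of_gt hrp)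
    have hinv : 0 < (r i)⁻¹ := inv_pos.mpr hrp
    nlinarith
  -- sign endpoints
  have h1lt : 0 < β * (1:ℝ) + C := by
    have := (hsign1 1 le_rfl (by omega)).mp hr1
    simpa using this
  have hNlt : β * ((N:ℝ) - 1) + C < 0 := by
    have := (hsign2 (N-1) (by omega) le_rfl).mp hrN1
    rwa [hcast] at this
  have hβneg : β < 0 := by
    by_contra hcon
    push_neg at hcon
    have h := mul_le_mul_of_nonneg_left (show (1:ℝ) ≤ (N:ℝ) - 1 by linarith) hcon
    linarith
  have hdec : ∀ i j : ℕ, i < j → β * (j:ℝ) + C < β * (i:ℝ) + C := by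
    intro i j hij
    have hij' : (i:ℝ) < (j:ℝ) := by exact_mod_cast hij
    have := mul_lt_mul_of_neg_left hij' hβneg
    linarith
  -- least index with nonpositive sign
  have hQex : ∃ i : ℕ, 1 ≤ i ∧ β * (i:ℝ) + C ≤ 0 :=
    ⟨N-1, by omega, by rw [hcast]; linarith⟩
  set istar := Nat.find hQex with histar
  have hspec := Nat.find_spec hQex
  have h1star : 1 ≤ istar := hspec.1
  have hstarle : istar ≤ N - 1 := Nat.find_min' hQex ⟨by omega, by rw [hcast]; linarith⟩
  have hbefore : ∀ i, 1 ≤ i → i < istar → 0 < β * (i:ℝ) + C := by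
    intro i h1 h2
    have := Nat.find_min hQex h2
    push_neg at this
    exact this h1
  have hafter : ∀ i, istar < i → β * (i:ℝ) + C < 0 :=
    fun i h => lt_of_lt_of_le (hdec istar i h) hspec.2
  refine ⟨istar, ⟨⟨h1star, hstarle⟩, ?_, ?_, ?_⟩, ?_⟩
  · intro i h1 h2
    have h2' : i ≤ N - 1 := by omega
    exact hlt i h1 h2' ((hsign1 i h1 h2').mpr (hbefore i h1 h2))
  · intro i h1 h2
    exact hgt i (by omega) h2 ((hsign2 i (by omega) h2).mpr (hafter i h1))
  · exact hle istar h1star hstarle ((hsign3 istar h1star hstarle).mpr hspec.2)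
  · rintro j ⟨⟨hj1, hj2⟩, hA, hB, hCle⟩
    -- r j ≤ 1
    have hrj : r j ≤ 1 := by
      by_contra hcon
      push_neg at hcon
      have := hlt j hj1 hj2 hcon
      linarith
    have hjQ : 1 ≤ j ∧ β * (j:ℝ) + C ≤ 0 := ⟨hj1, (hsign3 j hj1 hj2).mp hrj⟩
    have h1 : istar ≤ j := Nat.find_min' hQex hjQ
    have h2 : j ≤ istar := by
      by_contra hcon
      push_neg at hcon
      have hAs := hA istar h1star hcon
      have hles := hle istar h1star hstarle ((hsign3 istar h1star hstarle).mpr hspec.2)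
      linarith
    omega
end

section
/- Assume R(0) < 1 < R(1) (invasion scenario B←→A for large N). Then there exists N̄ such that for every N ≥ N̄ one has ρ_A^{(N)} < 1/N and ρ_B^{(N)} < 1/N; in particular, for large enough N the evolutionary scenarios with ρ_A > 1/N, ρ_B < 1/N and with ρ_A < 1/N, ρ_B > 1/N are ruled out. -/
open Filter Finset

private lemma auxPos (w x : ℝ) (hw0 : 0 ≤ w) (hw1 : w ≤ 1) (hx : 0 < x) :
    0 < 1 - w + w * x := by
  rcases lt_or_ge w 1 with h | h
  · nlinarith [mul_nonneg hw0 hx.le]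
  · have hw : w = 1 := le_antisymm hw1 h
    rw [hw]; linarith

private lemma auxEvent (q : ℝ) (hq0 : 0 < q) (hq1 : q < 1) (K : ℕ) (hK : 0 < K) :
    ∃ M : ℕ, ∀ N, M ≤ N → (N : ℝ) * q ^ (N / K) < 1 := by
  have h0 : Tendsto (fun n : ℕ => (n : ℝ) * q ^ n) atTop (nhds 0) := by
    have hs : Summable (fun n : ℕ => (n : ℝ) ^ 1 * q ^ n) :=
      summable_pow_mul_geometric_of_norm_lt_one 1
        (by rw [Real.norm_eq_abs, abs_of_pos hq0]; exact hq1)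
    simpa using hs.tendsto_atTop_zero
  have h1 : Tendsto (fun n : ℕ => q ^ n) atTop (nhds 0) :=
    tendsto_pow_atTop_nhds_zero_of_lt_one hq0.le hq1
  have h2 : Tendsto (fun m : ℕ => (K : ℝ) * ((m : ℝ) * q ^ m) + (K : ℝ) * q ^ m)
      atTop (nhds 0) := by
    simpa using (h0.const_mul (K : ℝ)).add (h1.const_mul (K : ℝ))
  have hdiv : Tendsto (fun N : ℕ => N / K) atTop atTop := by
    apply Filter.tendsto_atTop_atTop.mpr
    intro bb
    exact ⟨bb * K, fun n hn => (Nat.le_div_iff_mul_le hK).mpr hn⟩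
  have h3 := h2.comp hdiv
  have h4 : ∀ᶠ N : ℕ in atTop,
      (K : ℝ) * (((N / K : ℕ) : ℝ) * q ^ (N / K)) + (K : ℝ) * q ^ (N / K) < 1 := by
    have := h3.eventually (eventually_lt_nhds (show (0:ℝ) < 1 by norm_num))
    simpa [Function.comp] using this
  rw [Filter.eventually_atTop] at h4
  obtain ⟨M, hM⟩ := h4
  refine ⟨M, fun N hN => ?_⟩
  have hbd := hM N hN
  have hN2 : N < K * (N / K) + K := by
    have h5 := Nat.div_add_mod N K
    have h6 := Nat.mod_lt N hK
    omega
  have hN2' : (N : ℝ) ≤ (K : ℝ) * ((N / K : ℕ) : ℝ) + K := by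
    have : (N:ℝ) < (K : ℝ) * ((N / K : ℕ) : ℝ) + K := by exact_mod_cast hN2
    linarith
  have hpow : (0:ℝ) ≤ q ^ (N / K) := pow_nonneg hq0.le _
  nlinarith [mul_le_mul_of_nonneg_right hN2' hpow]

set_option maxHeartbeats 2000000 in
/-- if R(0) < 1 < R(1) (invasion scenario B←→A for large N), then
for all large enough N, ρ_A^{(N)} < 1/N and ρ_B^{(N)} < 1/N; in particular the
scenarios with ρ_A > 1/N, ρ_B < 1/N and with ρ_A < 1/N, ρ_B > 1/N are ruled out. -/
theorem moran_large_N_coordination_scenarios_ruled_out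
    (a b c d w : ℝ)
    (ha : 0 < a) (hb : 0 < b) (hc : 0 < c) (hd : 0 < d)
    (hw0 : 0 ≤ w) (hw1 : w ≤ 1)
    (r : ℕ → ℕ → ℝ)
    (hr : ∀ N i, 3 ≤ N → 1 ≤ i →
      r N i = (1 - w + w * (a * ((i : ℝ) - 1) / ((N : ℝ) - 1) +
                b * ((N : ℝ) - (i : ℝ)) / ((N : ℝ) - 1))) /
              (1 - w + w * (c * (i : ℝ) / ((N : ℝ) - 1) +
                d * ((N : ℝ) - (i : ℝ) - 1) / ((N : ℝ) - 1))))
    (R : ℝ → ℝ)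
    (hR : ∀ y, R y = (1 - w + w * (a * y + b * (1 - y))) /
                     (1 - w + w * (c * y + d * (1 - y))))
    (π : ℕ → ℕ → ℝ)
    (hπ0 : ∀ N, π N 0 = 0) (hπN : ∀ N, π N N = 1)
    (hπ : ∀ N i, 3 ≤ N → 1 ≤ i → i ≤ N - 1 →
      π N i = (1 + ∑ j ∈ Finset.Icc 1 (i - 1), ∏ k ∈ Finset.Icc 1 j, (r N k)⁻¹) /
              (1 + ∑ j ∈ Finset.Icc 1 (N - 1), ∏ k ∈ Finset.Icc 1 j, (r N k)⁻¹))
    (hR0 : R 0 < 1) (hR1 : 1 < R 1) :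
    ∃ Nbar : ℕ, ∀ N, Nbar ≤ N →
      (π N 1 < 1 / (N : ℝ) ∧ 1 - π N (N - 1) < 1 / (N : ℝ)) ∧
      ¬(1 / (N : ℝ) < π N 1 ∧ 1 - π N (N - 1) < 1 / (N : ℝ)) ∧
      ¬(π N 1 < 1 / (N : ℝ) ∧ 1 / (N : ℝ) < 1 - π N (N - 1)) := by
  have hA0 : 0 < 1 - w + w * b := auxPos w b hw0 hw1 hb
  have hD0 : 0 < 1 - w + w * d := auxPos w d hw0 hw1 hd
  have hA1 : 0 < 1 - w + w * a := auxPos w a hw0 hw1 ha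
  have hC1 : 0 < 1 - w + w * c := auxPos w c hw0 hw1 hc
  -- corner inequalities
  have hbd : 1 - w + w * b < 1 - w + w * d := by
    have h := hR0
    rw [hR 0] at h
    have hnum : 1 - w + w * (a * 0 + b * (1 - 0)) = 1 - w + w * b := by ring
    have hden : 1 - w + w * (c * 0 + d * (1 - 0)) = 1 - w + w * d := by ring
    rw [hnum, hden] at h
    have := (div_lt_one hD0).mp h
    linarith
  have hca : 1 - w + w * c < 1 - w + w * a := by
    have h := hR1
    rw [hR 1] at h
    have hnum : 1 - w + w * (a * 1 + b * (1 - 1)) = 1 - w + w * a := by ring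
    have hden : 1 - w + w * (c * 1 + d * (1 - 1)) = 1 - w + w * c := by ring
    rw [hnum, hden] at h
    have := (one_lt_div hC1).mp h
    linarith
  obtain ⟨e0, he0def⟩ : ∃ x : ℝ, x = w * d - w * b := ⟨_, rfl⟩
  obtain ⟨e1, he1def⟩ : ∃ x : ℝ, x = w * a - w * c := ⟨_, rfl⟩
  have he0 : 0 < e0 := by rw [he0def]; linarith
  have he1 : 0 < e1 := by rw [he1def]; linarith
  obtain ⟨C, hCdef⟩ : ∃ x : ℝ, x = w * |a - b| + w * |c - d| + 1 := ⟨_, rfl⟩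
  have hCpos : 0 < C := by
    rw [hCdef]
    have := mul_nonneg hw0 (abs_nonneg (a - b))
    have := mul_nonneg hw0 (abs_nonneg (c - d))
    linarith
  obtain ⟨δ0, hδ0def⟩ : ∃ x : ℝ, x = e0 / (4 * C) := ⟨_, rfl⟩
  obtain ⟨δ1, hδ1def⟩ : ∃ x : ℝ, x = e1 / (4 * C) := ⟨_, rfl⟩
  have hδ0 : 0 < δ0 := by rw [hδ0def]; positivity
  have hδ1 : 0 < δ1 := by rw [hδ1def]; positivity
  have hCδ0 : C * δ0 = e0 / 4 := by rw [hδ0def]; field_simp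
  have hCδ1 : C * δ1 = e1 / 4 := by rw [hδ1def]; field_simp
  obtain ⟨q, hqdef⟩ : ∃ x : ℝ, x = (1 - w + w * b + e0 / 4) / (1 - w + w * d - e0 / 4) := ⟨_, rfl⟩
  obtain ⟨Q, hQdef⟩ : ∃ x : ℝ, x = (1 - w + w * a - e1 / 4) / (1 - w + w * c + e1 / 4) := ⟨_, rfl⟩
  have hqnum : 0 < 1 - w + w * b + e0 / 4 := by rw [he0def]; linarith
  have hqden : 0 < 1 - w + w * d - e0 / 4 := by rw [he0def]; linarith
  have hQnum : 0 < 1 - w + w * a - e1 / 4 := by rw [he1def]; linarith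
  have hQden : 0 < 1 - w + w * c + e1 / 4 := by rw [he1def]; linarith
  have hq0 : 0 < q := by rw [hqdef]; exact div_pos hqnum hqden
  have hq1 : q < 1 := by
    rw [hqdef, div_lt_one hqden, he0def]
    rw [he0def] at he0
    linarith
  have hQ1 : 1 < Q := by
    rw [hQdef, lt_div_iff₀ hQden, he1def]
    rw [he1def] at he1
    linarith
  have hQ0 : 0 < Q := lt_trans one_pos hQ1
  -- absolute value bounds
  have habC1 : w * (a - b) ≤ C := by
    rw [hCdef]
    have h1 : w * (a - b) ≤ w * |a - b| :=
      mul_le_mul_of_nonneg_left (le_abs_self _) hw0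
    have h2 : 0 ≤ w * |c - d| := mul_nonneg hw0 (abs_nonneg _)
    linarith
  have habC2 : -C ≤ w * (a - b) := by
    rw [hCdef]
    have h1 : -(w * |a - b|) ≤ w * (a - b) := by
      have := mul_le_mul_of_nonneg_left (neg_abs_le (a - b)) hw0
      linarith [this]
    have h2 : 0 ≤ w * |c - d| := mul_nonneg hw0 (abs_nonneg _)
    linarith
  have hcdC1 : w * (c - d) ≤ C := by
    rw [hCdef]
    have h1 : w * (c - d) ≤ w * |c - d| :=
      mul_le_mul_of_nonneg_left (le_abs_self _) hw0
    have h2 : 0 ≤ w * |a - b| := mul_nonneg hw0 (abs_nonneg _)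
    linarith
  have hcdC2 : -C ≤ w * (c - d) := by
    rw [hCdef]
    have h1 : -(w * |c - d|) ≤ w * (c - d) := by
      have := mul_le_mul_of_nonneg_left (neg_abs_le (c - d)) hw0
      linarith [this]
    have h2 : 0 ≤ w * |a - b| := mul_nonneg hw0 (abs_nonneg _)
    linarith
  -- positivity of ratios
  have hrpos : ∀ n i : ℕ, 3 ≤ n → 1 ≤ i → i ≤ n - 1 → 0 < r n i := by
    intro n i hn hi hile
    rw [hr n i hn hi]
    have hn3 : (3:ℝ) ≤ (n:ℝ) := by exact_mod_cast hn
    have ht0 : (0:ℝ) < (n:ℝ) - 1 := by linarith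
    have hi1 : (1:ℝ) ≤ (i:ℝ) := by exact_mod_cast hi
    have hiN : (i:ℝ) + 1 ≤ (n:ℝ) := by exact_mod_cast Nat.add_le_of_le_sub (by omega) hile
    apply div_pos
    · apply auxPos w _ hw0 hw1
      have h1 : 0 ≤ a * ((i:ℝ) - 1) / ((n:ℝ) - 1) :=
        div_nonneg (mul_nonneg ha.le (by linarith)) ht0.le
      have h2 : 0 < b * ((n:ℝ) - (i:ℝ)) / ((n:ℝ) - 1) := by
        apply div_pos (mul_pos hb (by linarith)) ht0
      linarith
    · apply auxPos w _ hw0 hw1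
      have h1 : 0 < c * (i:ℝ) / ((n:ℝ) - 1) := by
        apply div_pos (mul_pos hc (by linarith)) ht0
      have h2 : 0 ≤ d * ((n:ℝ) - (i:ℝ) - 1) / ((n:ℝ) - 1) := by
        apply div_nonneg (mul_nonneg hd.le (by linarith)) ht0.le
      linarith
  -- claim L : small i gives r ≤ q
  have claimL : ∀ n i : ℕ, 3 ≤ n → 1 ≤ i → (i:ℝ) ≤ δ0 * ((n:ℝ) - 1) → r n i ≤ q := by
    intro n i hn hi hile
    rw [hr n i hn hi]
    have hn3 : (3:ℝ) ≤ (n:ℝ) := by exact_mod_cast hn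
    have ht0 : (0:ℝ) < (n:ℝ) - 1 := by linarith
    have hi1 : (1:ℝ) ≤ (i:ℝ) := by exact_mod_cast hi
    have hnum : 1 - w + w * (a * ((i:ℝ) - 1) / ((n:ℝ) - 1) + b * ((n:ℝ) - (i:ℝ)) / ((n:ℝ) - 1))
        = (1 - w + w * b) + (w * (a - b)) * (((i:ℝ) - 1) / ((n:ℝ) - 1)) := by
      field_simp
      ring
    have hden : 1 - w + w * (c * (i:ℝ) / ((n:ℝ) - 1) + d * ((n:ℝ) - (i:ℝ) - 1) / ((n:ℝ) - 1))
        = (1 - w + w * d) + (w * (c - d)) * ((i:ℝ) / ((n:ℝ) - 1)) := by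
      field_simp
      ring
    rw [hnum, hden, hqdef]
    have hy0 : 0 ≤ ((i:ℝ) - 1) / ((n:ℝ) - 1) := div_nonneg (by linarith) ht0.le
    have hyd : ((i:ℝ) - 1) / ((n:ℝ) - 1) ≤ δ0 := by
      rw [div_le_iff₀ ht0]; linarith
    have hy'0 : 0 ≤ (i:ℝ) / ((n:ℝ) - 1) := div_nonneg (by linarith) ht0.le
    have hy'd : (i:ℝ) / ((n:ℝ) - 1) ≤ δ0 := by
      rw [div_le_iff₀ ht0]; linarith
    have hnum_le : (1 - w + w * b) + (w * (a - b)) * (((i:ℝ) - 1) / ((n:ℝ) - 1))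
        ≤ 1 - w + w * b + e0 / 4 := by
      have h1 : (w * (a - b)) * (((i:ℝ) - 1) / ((n:ℝ) - 1)) ≤ C * δ0 :=
        le_trans (mul_le_mul_of_nonneg_right habC1 hy0)
          (mul_le_mul_of_nonneg_left hyd hCpos.le)
      linarith [hCδ0]
    have hden_ge : 1 - w + w * d - e0 / 4
        ≤ (1 - w + w * d) + (w * (c - d)) * ((i:ℝ) / ((n:ℝ) - 1)) := by
      have h1 : -(C * δ0) ≤ (w * (c - d)) * ((i:ℝ) / ((n:ℝ) - 1)) := by
        have t1 : -C * ((i:ℝ) / ((n:ℝ) - 1)) ≤ (w * (c - d)) * ((i:ℝ) / ((n:ℝ) - 1)) :=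
          mul_le_mul_of_nonneg_right hcdC2 hy'0
        have t2 : C * ((i:ℝ) / ((n:ℝ) - 1)) ≤ C * δ0 :=
          mul_le_mul_of_nonneg_left hy'd hCpos.le
        linarith [t1, t2]
      linarith [hCδ0]
    exact div_le_div₀ hqnum.le hnum_le hqden hden_ge
  -- claim H : large i gives Q ≤ r
  have claimH : ∀ n i : ℕ, 3 ≤ n → 1 ≤ i → i ≤ n - 1 →
      (n:ℝ) - (i:ℝ) ≤ δ1 * ((n:ℝ) - 1) → Q ≤ r n i := by
    intro n i hn hi hile hclose
    rw [hr n i hn hi]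
    have hn3 : (3:ℝ) ≤ (n:ℝ) := by exact_mod_cast hn
    have ht0 : (0:ℝ) < (n:ℝ) - 1 := by linarith
    have hi1 : (1:ℝ) ≤ (i:ℝ) := by exact_mod_cast hi
    have hiN : (i:ℝ) + 1 ≤ (n:ℝ) := by exact_mod_cast Nat.add_le_of_le_sub (by omega) hile
    have hnum : 1 - w + w * (a * ((i:ℝ) - 1) / ((n:ℝ) - 1) + b * ((n:ℝ) - (i:ℝ)) / ((n:ℝ) - 1))
        = (1 - w + w * a) - (w * (a - b)) * (((n:ℝ) - (i:ℝ)) / ((n:ℝ) - 1)) := by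
      field_simp
      ring
    have hden : 1 - w + w * (c * (i:ℝ) / ((n:ℝ) - 1) + d * ((n:ℝ) - (i:ℝ) - 1) / ((n:ℝ) - 1))
        = (1 - w + w * c) - (w * (c - d)) * (((n:ℝ) - 1 - (i:ℝ)) / ((n:ℝ) - 1)) := by
      field_simp
      ring
    have hdenpos : 0 < 1 - w + w * (c * (i:ℝ) / ((n:ℝ) - 1) + d * ((n:ℝ) - (i:ℝ) - 1) / ((n:ℝ) - 1)) := by
      apply auxPos w _ hw0 hw1
      have h1 : 0 < c * (i:ℝ) / ((n:ℝ) - 1) := div_pos (mul_pos hc (by linarith)) ht0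
      have h2 : 0 ≤ d * ((n:ℝ) - (i:ℝ) - 1) / ((n:ℝ) - 1) :=
        div_nonneg (mul_nonneg hd.le (by linarith)) ht0.le
      linarith
    rw [hden] at hdenpos
    rw [hnum, hden, hQdef]
    have hz0 : 0 ≤ ((n:ℝ) - (i:ℝ)) / ((n:ℝ) - 1) := div_nonneg (by linarith) ht0.le
    have hzd : ((n:ℝ) - (i:ℝ)) / ((n:ℝ) - 1) ≤ δ1 := by
      rw [div_le_iff₀ ht0]; linarith
    have hz'0 : 0 ≤ ((n:ℝ) - 1 - (i:ℝ)) / ((n:ℝ) - 1) := div_nonneg (by linarith) ht0.le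
    have hz'd : ((n:ℝ) - 1 - (i:ℝ)) / ((n:ℝ) - 1) ≤ δ1 := by
      rw [div_le_iff₀ ht0]; linarith
    have hnum_ge : 1 - w + w * a - e1 / 4
        ≤ (1 - w + w * a) - (w * (a - b)) * (((n:ℝ) - (i:ℝ)) / ((n:ℝ) - 1)) := by
      have h1 : (w * (a - b)) * (((n:ℝ) - (i:ℝ)) / ((n:ℝ) - 1)) ≤ C * δ1 :=
        le_trans (mul_le_mul_of_nonneg_right habC1 hz0)
          (mul_le_mul_of_nonneg_left hzd hCpos.le)
      linarith [hCδ1]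
    have hden_le : (1 - w + w * c) - (w * (c - d)) * (((n:ℝ) - 1 - (i:ℝ)) / ((n:ℝ) - 1))
        ≤ 1 - w + w * c + e1 / 4 := by
      have h1 : -(C * δ1) ≤ (w * (c - d)) * (((n:ℝ) - 1 - (i:ℝ)) / ((n:ℝ) - 1)) := by
        have t1 : -C * (((n:ℝ) - 1 - (i:ℝ)) / ((n:ℝ) - 1)) ≤ (w * (c - d)) * (((n:ℝ) - 1 - (i:ℝ)) / ((n:ℝ) - 1)) :=
          mul_le_mul_of_nonneg_right hcdC2 hz'0
        have t2 : C * (((n:ℝ) - 1 - (i:ℝ)) / ((n:ℝ) - 1)) ≤ C * δ1 :=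
          mul_le_mul_of_nonneg_left hz'd hCpos.le
        linarith [t1, t2]
      linarith [hCδ1]
    exact div_le_div₀ (by linarith) hnum_ge hdenpos hden_le
  -- choose K0, K1 and thresholds
  obtain ⟨K0, hK0_2, hK0_ge⟩ : ∃ K : ℕ, 2 ≤ K ∧ 2 / δ0 ≤ (K:ℝ) := by
    refine ⟨Nat.ceil (2 / δ0) + 2, by omega, ?_⟩
    have := Nat.le_ceil (2 / δ0)
    push_cast
    linarith
  obtain ⟨K1, hK1_2, hK1_ge⟩ : ∃ K : ℕ, 2 ≤ K ∧ 2 / δ1 ≤ (K:ℝ) := by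
    refine ⟨Nat.ceil (2 / δ1) + 2, by omega, ?_⟩
    have := Nat.le_ceil (2 / δ1)
    push_cast
    linarith
  have hK0δ : 2 ≤ (K0:ℝ) * δ0 := by
    rw [div_le_iff₀ hδ0] at hK0_ge; linarith
  have hK1δ : 2 ≤ (K1:ℝ) * δ1 := by
    rw [div_le_iff₀ hδ1] at hK1_ge; linarith
  obtain ⟨M0, hM0⟩ := auxEvent q hq0 hq1 K0 (by omega)
  obtain ⟨M1, hM1⟩ := auxEvent Q⁻¹ (inv_pos.mpr hQ0) (inv_lt_one_of_one_lt₀ hQ1) K1 (by omega)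
  refine ⟨max (max M0 M1) (max (max K0 K1) 4), fun N hN => ?_⟩
  simp only [max_le_iff] at hN
  obtain ⟨⟨hNM0, hNM1⟩, ⟨hNK0, hNK1⟩, hN4⟩ := hN
  have hN3 : 3 ≤ N := by omega
  have hNR : (4:ℝ) ≤ (N:ℝ) := by exact_mod_cast hN4
  have hNpos : (0:ℝ) < (N:ℝ) := by linarith
  -- the indices m0, m1
  obtain ⟨m0, hm0def⟩ : ∃ m, m = N / K0 := ⟨_, rfl⟩
  obtain ⟨m1, hm1def⟩ : ∃ m, m = N / K1 := ⟨_, rfl⟩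
  have hm0_1 : 1 ≤ m0 := by
    rw [hm0def]; exact (Nat.one_le_div_iff (by omega)).mpr hNK0
  have hm1_1 : 1 ≤ m1 := by
    rw [hm1def]; exact (Nat.one_le_div_iff (by omega)).mpr hNK1
  have h2m0 : 2 * m0 ≤ N := by
    have h1 : m0 * K0 ≤ N := by rw [hm0def]; exact Nat.div_mul_le_self N K0
    have h2 : m0 * 2 ≤ m0 * K0 := Nat.mul_le_mul_left m0 hK0_2
    omega
  have h2m1 : 2 * m1 ≤ N := by
    have h1 : m1 * K1 ≤ N := by rw [hm1def]; exact Nat.div_mul_le_self N K1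
    have h2 : m1 * 2 ≤ m1 * K1 := Nat.mul_le_mul_left m1 hK1_2
    omega
  have hm0R : (m0:ℝ) ≤ δ0 * ((N:ℝ) - 1) := by
    have h1 : (m0:ℝ) * (K0:ℝ) ≤ (N:ℝ) := by
      exact_mod_cast (hm0def ▸ Nat.div_mul_le_self N K0)
    have hK0pos : (0:ℝ) < (K0:ℝ) := by exact_mod_cast (by omega : 0 < K0)
    have hstep : (m0:ℝ) * (K0:ℝ) ≤ (δ0 * ((N:ℝ) - 1)) * (K0:ℝ) := by
      have hh : 2 * ((N:ℝ) - 1) ≤ ((K0:ℝ) * δ0) * ((N:ℝ) - 1) :=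
        mul_le_mul_of_nonneg_right hK0δ (by linarith)
      linarith [h1, hh, hNR]
    exact le_of_mul_le_mul_right hstep hK0pos
  have hm1R : (m1:ℝ) ≤ δ1 * ((N:ℝ) - 1) := by
    have h1 : (m1:ℝ) * (K1:ℝ) ≤ (N:ℝ) := by
      exact_mod_cast (hm1def ▸ Nat.div_mul_le_self N K1)
    have hK1pos : (0:ℝ) < (K1:ℝ) := by exact_mod_cast (by omega : 0 < K1)
    have hstep : (m1:ℝ) * (K1:ℝ) ≤ (δ1 * ((N:ℝ) - 1)) * (K1:ℝ) := by
      have hh : 2 * ((N:ℝ) - 1) ≤ ((K1:ℝ) * δ1) * ((N:ℝ) - 1) :=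
        mul_le_mul_of_nonneg_right hK1δ (by linarith)
      linarith [h1, hh, hNR]
    exact le_of_mul_le_mul_right hstep hK1pos
  -- the big sum
  obtain ⟨S, hSdef⟩ : ∃ x : ℝ, x = ∑ j ∈ Finset.Icc 1 (N - 1), ∏ k ∈ Finset.Icc 1 j, (r N k)⁻¹ :=
    ⟨_, rfl⟩
  have hPpos : ∀ j ∈ Finset.Icc 1 (N - 1), (0:ℝ) < ∏ k ∈ Finset.Icc 1 j, (r N k)⁻¹ := by
    intro j hj
    rw [Finset.mem_Icc] at hj
    apply Finset.prod_pos
    intro k hk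
    rw [Finset.mem_Icc] at hk
    exact inv_pos.mpr (hrpos N k hN3 hk.1 (le_trans hk.2 hj.2))
  have hS0 : 0 ≤ S := by
    rw [hSdef]; exact Finset.sum_nonneg fun j hj => (hPpos j hj).le
  have h1Spos : (0:ℝ) < 1 + S := by linarith
  -- Goal A  : π N 1 < 1/N
  have hm0mem : m0 ∈ Finset.Icc 1 (N - 1) := by
    rw [Finset.mem_Icc]; omega
  have hPm0 : (q⁻¹) ^ m0 ≤ ∏ k ∈ Finset.Icc 1 m0, (r N k)⁻¹ := by
    have h1 : ∏ _k ∈ Finset.Icc 1 m0, q⁻¹ ≤ ∏ k ∈ Finset.Icc 1 m0, (r N k)⁻¹ := by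
      apply Finset.prod_le_prod
      · intro k _; exact (inv_pos.mpr hq0).le
      · intro k hk
        rw [Finset.mem_Icc] at hk
        have hrk : r N k ≤ q := by
          apply claimL N k hN3 hk.1
          have : (k:ℝ) ≤ (m0:ℝ) := by exact_mod_cast hk.2
          linarith
        have hrkpos : 0 < r N k := hrpos N k hN3 hk.1 (by omega)
        exact inv_anti₀ hrkpos hrk
    calc (q⁻¹) ^ m0 = ∏ _k ∈ Finset.Icc 1 m0, q⁻¹ := by
          rw [Finset.prod_const, Nat.card_Icc]; norm_num
      _ ≤ _ := h1
  have hterm0 : ∏ k ∈ Finset.Icc 1 m0, (r N k)⁻¹ ≤ S := by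
    rw [hSdef]
    exact Finset.single_le_sum (fun j hj => (hPpos j hj).le) hm0mem
  have hNq : (N:ℝ) * q ^ m0 < 1 := by rw [hm0def]; exact hM0 N hNM0
  have hqm0pos : 0 < q ^ m0 := pow_pos hq0 m0
  have hNltS : (N:ℝ) < 1 + S := by
    have h1 : (N:ℝ) < 1 / q ^ m0 := (lt_div_iff₀ hqm0pos).mpr hNq
    have h2 : (1:ℝ) / q ^ m0 = (q⁻¹) ^ m0 := by rw [one_div, inv_pow]
    linarith [hPm0, hterm0]
  have goalA : π N 1 < 1 / (N:ℝ) := by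
    rw [hπ N 1 hN3 le_rfl (by omega)]
    have hempty : Finset.Icc 1 (1 - 1) = (∅ : Finset ℕ) := by
      apply Finset.Icc_eq_empty; omega
    rw [hempty, Finset.sum_empty, ← hSdef]
    rw [div_lt_div_iff₀ h1Spos hNpos]
    ring_nf
    linarith
  -- Goal B : 1 - π N (N-1) < 1/N
  obtain ⟨PN, hPNdef⟩ : ∃ x : ℝ, x = ∏ k ∈ Finset.Icc 1 (N - 1), (r N k)⁻¹ := ⟨_, rfl⟩
  obtain ⟨Pj, hPjdef⟩ : ∃ x : ℝ, x = ∏ k ∈ Finset.Icc 1 (N - 1 - m1), (r N k)⁻¹ := ⟨_, rfl⟩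
  obtain ⟨S', hS'def⟩ : ∃ x : ℝ,
      x = ∑ j ∈ Finset.Icc 1 (N - 2), ∏ k ∈ Finset.Icc 1 j, (r N k)⁻¹ := ⟨_, rfl⟩
  have hSS' : S = S' + PN := by
    rw [hSdef, hS'def, hPNdef, show N - 1 = (N - 2) + 1 by omega,
      Finset.sum_Icc_succ_top (by omega : 1 ≤ N - 2 + 1)]
  have hπB : π N (N - 1) = (1 + S') / (1 + S) := by
    rw [hπ N (N - 1) hN3 (by omega) le_rfl, show N - 1 - 1 = N - 2 by omega,
      ← hSdef, ← hS'def]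
  have hrest : 1 - π N (N - 1) = PN / (1 + S) := by
    rw [hπB]
    rw [eq_div_iff (ne_of_gt h1Spos)]
    field_simp
    rw [hSS']
    ring
  have hIoc : ∀ x : ℕ, Finset.Icc 1 x = Finset.Ioc 0 x := by
    intro x; ext y; simp [Finset.mem_Icc, Finset.mem_Ioc]; omega
  have hPsplit : PN = Pj * ∏ k ∈ Finset.Ioc (N - 1 - m1) (N - 1), (r N k)⁻¹ := by
    rw [hPNdef, hPjdef, hIoc, hIoc]
    exact (Finset.prod_Ioc_consecutive _ (by omega : 0 ≤ N - 1 - m1)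
      (by omega : N - 1 - m1 ≤ N - 1)).symm
  have hPjpos : 0 < Pj := by
    rw [hPjdef]
    apply Finset.prod_pos
    intro k hk
    rw [Finset.mem_Icc] at hk
    exact inv_pos.mpr (hrpos N k hN3 hk.1 (by omega))
  have htail : ∏ k ∈ Finset.Ioc (N - 1 - m1) (N - 1), (r N k)⁻¹ ≤ (Q⁻¹) ^ m1 := by
    have h1 : ∏ k ∈ Finset.Ioc (N - 1 - m1) (N - 1), (r N k)⁻¹
        ≤ ∏ _k ∈ Finset.Ioc (N - 1 - m1) (N - 1), Q⁻¹ := by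
      apply Finset.prod_le_prod
      · intro k hk
        rw [Finset.mem_Ioc] at hk
        exact (inv_pos.mpr (hrpos N k hN3 (by omega) hk.2)).le
      · intro k hk
        rw [Finset.mem_Ioc] at hk
        have hQr : Q ≤ r N k := by
          apply claimH N k hN3 (by omega) hk.2
          have hk1 : N ≤ k + m1 := by omega
          have : (N:ℝ) ≤ (k:ℝ) + (m1:ℝ) := by exact_mod_cast hk1
          linarith
        exact inv_anti₀ hQ0 hQr
    have h2 : ∏ _k ∈ Finset.Ioc (N - 1 - m1) (N - 1), Q⁻¹ = (Q⁻¹) ^ m1 := by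
      rw [Finset.prod_const, Nat.card_Ioc, show N - 1 - (N - 1 - m1) = m1 by omega]
    linarith [h1, h2.le, h2.ge]
  have hQim1 : (0:ℝ) ≤ (Q⁻¹) ^ m1 := pow_nonneg (inv_pos.mpr hQ0).le m1
  have hPNle : PN ≤ Pj * (Q⁻¹) ^ m1 := by
    rw [hPsplit]
    exact mul_le_mul_of_nonneg_left htail hPjpos.le
  have hPjmem : N - 1 - m1 ∈ Finset.Icc 1 (N - 1) := by
    rw [Finset.mem_Icc]; omega
  have hPjleS : Pj ≤ S := by
    rw [hSdef, hPjdef]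
    exact Finset.single_le_sum (fun j hj => (hPpos j hj).le) hPjmem
  have hNQ : (N:ℝ) * (Q⁻¹) ^ m1 < 1 := by rw [hm1def]; exact hM1 N hNM1
  have goalB : 1 - π N (N - 1) < 1 / (N:ℝ) := by
    rw [hrest, div_lt_div_iff₀ h1Spos hNpos]
    have h1 : PN * (N:ℝ) ≤ (Pj * (Q⁻¹) ^ m1) * (N:ℝ) :=
      mul_le_mul_of_nonneg_right hPNle hNpos.le
    have h2 : Pj * ((N:ℝ) * (Q⁻¹) ^ m1) < Pj * 1 :=
      mul_lt_mul_of_pos_left hNQ hPjpos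
    linarith [h1, h2, hPjleS, hS0]
  exact ⟨⟨goalA, goalB⟩,
    fun h => absurd goalA (not_lt.mpr (le_of_lt h.1)),
    fun h => absurd goalB (not_lt.mpr (le_of_lt h.2))⟩
end

section
/- Let N₀ be a positive integer and x ∈ (0,1) with N₀·x an integer. Then, along population sizes N = m·N₀ with m → ∞: if R(0) > 1 and R(1) > 1 then π_{Nx}^{(N)} → 1, and if R(0) < 1 and R(1) < 1 then π_{Nx}^{(N)} → 0. -/
/-!
Write `f_i^{(N)}` and `g_i^{(N)}` as two affine fitness lines `F`, `G` on `[0, 1]`, evaluated at the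
points `(i - 1)/(N - 1)` and `i/(N - 1)`, which are `1/(N - 1)` apart. If `R(0), R(1) > 1`, the line
`F` lies strictly above `G` at both ends and hence on all of `[0, 1]`, so for large `N` we get
`r_i^{(N)} ≥ Q > 1` uniformly in `i`. The weights `γ_j = ∏_{k ≤ j} 1/r_k` then decay geometrically
and `1 - π_i ≤ (N - i) Q^{-i}`, which tends to `0` along `N = m N₀`, `i = m k`. If `R(0), R(1) < 1`,
symmetrically `r_i^{(N)} ≤ Q⁻¹ < 1`, the weights grow geometrically towards `γ_{N-1}` and
`π_i ≤ i Q^{-(N-i)} → 0`.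
-/

open Finset Filter Topology

noncomputable section

namespace Moran

/-- `f_i^{(N)} = fitness w a b ((i - 1) / (N - 1))`, `g_i^{(N)} = fitness w c d (i / (N - 1))` and
`R = fitness w a b / fitness w c d`. -/
def fitness (w p q y : ℝ) : ℝ := 1 - w + w * (p * y + q * (1 - y))

section Fitness

variable {w p q : ℝ}

lemma fitness_eq_convex_comb (w p q y : ℝ) :
    fitness w p q y = (1 - y) * fitness w p q 0 + y * fitness w p q 1 := by
  unfold fitness; ring

lemma fitness_sub_one_div (w p q : ℝ) {N : ℝ} (i : ℝ) (hN : N ≠ 1) :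
    fitness w p q ((i - 1) / (N - 1)) =
      1 - w + w * (p * (i - 1) / (N - 1) + q * (N - i) / (N - 1)) := by
  have : N - 1 ≠ 0 := sub_ne_zero.2 hN
  unfold fitness; field_simp; ring

lemma fitness_div (w p q : ℝ) {N : ℝ} (i : ℝ) (hN : N ≠ 1) :
    fitness w p q (i / (N - 1)) = 1 - w + w * (p * i / (N - 1) + q * (N - i - 1) / (N - 1)) := by
  have : N - 1 ≠ 0 := sub_ne_zero.2 hN
  unfold fitness; field_simp; ring

lemma fitness_sub_fitness (w p q s t : ℝ) :
    fitness w p q t - fitness w p q s = w * (p - q) * (t - s) := by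
  unfold fitness; ring

lemma fitness_pos (hw0 : 0 ≤ w) (hw1 : w ≤ 1) (hp : 0 < p) (hq : 0 < q) {y : ℝ}
    (hy0 : 0 ≤ y) (hy1 : y ≤ 1) : 0 < fitness w p q y := by
  have hpq : 0 < (1 - y) * q + y * p := by
    simpa using convex_Ioi (0 : ℝ) hq hp (sub_nonneg.2 hy1) hy0 (by ring)
  have := convex_Ioi (0 : ℝ) one_pos hpq (sub_nonneg.2 hw1) hw0 (by ring)
  simp only [Set.mem_Ioi, smul_eq_mul] at this
  unfold fitness
  linarith

lemma exists_mul_fitness_le_fitness {p' q' : ℝ} (hw0 : 0 ≤ w) (hw1 : w ≤ 1) (hp' : 0 < p')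
    (hq' : 0 < q') (h0 : fitness w p' q' 0 < fitness w p q 0)
    (h1 : fitness w p' q' 1 < fitness w p q 1) :
    ∃ Q > 1, ∃ η > 0, ∀ s ∈ Set.Icc (0 : ℝ) 1, ∀ t ∈ Set.Icc (0 : ℝ) 1, |t - s| ≤ η →
      Q * fitness w p' q' t ≤ fitness w p q s := by
  set F := fitness w p q
  set G := fitness w p' q'
  set μ := min (F 0 - G 0) (F 1 - G 1)
  set M := max (G 0) (G 1)
  -- `F - G ≥ μ` on `[0, 1]`, and moving the argument of `G` by at most `η` costs at most `μ / 2`.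
  have hμ : 0 < μ := lt_min (by linarith) (by linarith)
  have hM : 0 < M := (fitness_pos hw0 hw1 hp' hq' le_rfl zero_le_one).trans_le (le_max_left _ _)
  have hL : 0 < w * |p' - q'| + 1 := by positivity
  refine ⟨1 + μ / (2 * M), by simp only [lt_add_iff_pos_right]; positivity,
    μ / (2 * (w * |p' - q'| + 1)), by positivity, fun s hs t ht hst => ?_⟩
  have hgap : G s + μ ≤ F s := by
    have := fitness_eq_convex_comb w p q s
    have := fitness_eq_convex_comb w p' q' s
    nlinarith [min_le_left (F 0 - G 0) (F 1 - G 1), min_le_right (F 0 - G 0) (F 1 - G 1),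
      hs.1, hs.2]
  have hGM : G t ≤ M := by
    have := fitness_eq_convex_comb w p' q' t
    nlinarith [le_max_left (G 0) (G 1), le_max_right (G 0) (G 1), ht.1, ht.2]
  have hshift : G t - G s ≤ μ / 2 := by
    have hlip : G t - G s ≤ w * |p' - q'| * |t - s| := by
      rw [fitness_sub_fitness, mul_assoc, mul_assoc]
      exact mul_le_mul_of_nonneg_left
        ((le_abs_self _).trans (abs_mul (p' - q') (t - s)).le) hw0
    have := (le_div_iff₀ (by positivity)).1 hst
    nlinarith [abs_nonneg (t - s)]
  have hδ : μ / (2 * M) * G t ≤ μ / 2 := by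
    calc μ / (2 * M) * G t ≤ μ / (2 * M) * M := by gcongr
      _ = μ / 2 := by field_simp
  linarith

end Fitness

lemma eventually_forall_grid {P : ℝ → ℝ → Prop} {η : ℝ} (hη : 0 < η)
    (hP : ∀ s ∈ Set.Icc (0 : ℝ) 1, ∀ t ∈ Set.Icc (0 : ℝ) 1, |t - s| ≤ η → P s t) :
    ∀ᶠ N : ℕ in atTop, ∀ i ∈ Icc 1 (N - 1),
      P (((i : ℝ) - 1) / ((N : ℝ) - 1)) ((i : ℝ) / ((N : ℝ) - 1)) := by
  obtain ⟨M, hM⟩ := exists_nat_gt η⁻¹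
  filter_upwards [eventually_gt_atTop (M + 1)] with N hN i hi
  rw [mem_Icc] at hi
  have hNM : (M : ℝ) + 1 < N := by exact_mod_cast hN
  have hi1 : (1 : ℝ) ≤ i := by exact_mod_cast hi.1
  have hiN : (i : ℝ) + 1 ≤ N := by exact_mod_cast (by omega : i + 1 ≤ N)
  have hN1 : (0 : ℝ) < N - 1 := by linarith
  refine hP _ ⟨by positivity, ?_⟩ _ ⟨by positivity, ?_⟩ ?_
  · rw [div_le_one hN1]; linarith
  · rw [div_le_one hN1]; linarith
  · rw [← sub_div, sub_sub_cancel, abs_of_pos (by positivity), div_le_iff₀ hN1]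
    rw [inv_lt_iff_one_lt_mul₀ hη] at hM
    nlinarith

def moranRatio (w p q p' q' : ℝ) (N i : ℕ) : ℝ :=
  fitness w p q (((i : ℝ) - 1) / ((N : ℝ) - 1)) / fitness w p' q' ((i : ℝ) / ((N : ℝ) - 1))

section MoranRatio

variable {w p q p' q' : ℝ}

lemma exists_eventually_le_moranRatio (hw0 : 0 ≤ w) (hw1 : w ≤ 1) (hp' : 0 < p') (hq' : 0 < q')
    (h0 : fitness w p' q' 0 < fitness w p q 0) (h1 : fitness w p' q' 1 < fitness w p q 1) :
    ∃ Q > 1, ∀ᶠ N : ℕ in atTop, ∀ i ∈ Icc 1 (N - 1), Q ≤ moranRatio w p q p' q' N i := by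
  obtain ⟨Q, hQ, η, hη, hgap⟩ := exists_mul_fitness_le_fitness hw0 hw1 hp' hq' h0 h1
  exact ⟨Q, hQ, eventually_forall_grid hη fun s hs t ht hst =>
    (le_div_iff₀ (fitness_pos hw0 hw1 hp' hq' ht.1 ht.2)).2 (hgap s hs t ht hst)⟩

lemma exists_eventually_moranRatio_le_inv (hw0 : 0 ≤ w) (hw1 : w ≤ 1) (hp : 0 < p) (hq : 0 < q)
    (hp' : 0 < p') (hq' : 0 < q') (h0 : fitness w p q 0 < fitness w p' q' 0)
    (h1 : fitness w p q 1 < fitness w p' q' 1) :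
    ∃ Q > 1, ∀ᶠ N : ℕ in atTop, ∀ i ∈ Icc 1 (N - 1),
      0 < moranRatio w p q p' q' N i ∧ moranRatio w p q p' q' N i ≤ Q⁻¹ := by
  obtain ⟨Q, hQ, η, hη, hgap⟩ := exists_mul_fitness_le_fitness hw0 hw1 hp hq h0 h1
  refine ⟨Q, hQ, eventually_forall_grid (P := fun s t =>
    0 < fitness w p q s / fitness w p' q' t ∧ fitness w p q s / fitness w p' q' t ≤ Q⁻¹) hη
    fun s hs t ht hst => ?_⟩
  have hGt := fitness_pos hw0 hw1 hp' hq' ht.1 ht.2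
  refine ⟨div_pos (fitness_pos hw0 hw1 hp hq hs.1 hs.2) hGt, ?_⟩
  rw [div_le_iff₀ hGt, le_inv_mul_iff₀ (one_pos.trans hQ)]
  exact hgap t ht s hs (by rwa [abs_sub_comm])

end MoranRatio

@[to_additive]
lemma prod_Icc_eq_prod_range_succ {M : Type*} [CommMonoid M] (f : ℕ → M) (n : ℕ) :
    ∏ k ∈ Icc 1 n, f k = ∏ k ∈ range n, f (k + 1) := by
  rw [range_eq_Ico, prod_Ico_add', ← Ico_add_one_right_eq_Icc]

-- Indexed from `0`, so that the paper's `1 + ∑_{j=1}^{i-1}` becomes `∑_{j<i}`.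
def moranWeight (ρ : ℕ → ℝ) (j : ℕ) : ℝ := ∏ k ∈ range j, (ρ (k + 1))⁻¹

def fixationProb (ρ : ℕ → ℝ) (N i : ℕ) : ℝ :=
  (∑ j ∈ range i, moranWeight ρ j) / ∑ j ∈ range N, moranWeight ρ j

section Weights

variable {ρ : ℕ → ℝ} {j n N i : ℕ}

lemma one_add_sum_Icc_eq_sum_moranWeight (ρ : ℕ → ℝ) (hi : 1 ≤ i) :
    1 + ∑ j ∈ Icc 1 (i - 1), ∏ k ∈ Icc 1 j, (ρ k)⁻¹ = ∑ j ∈ range i, moranWeight ρ j := by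
  obtain ⟨n, rfl⟩ := Nat.exists_eq_add_of_le' hi
  simp only [moranWeight, sum_range_succ', prod_range_zero, add_tsub_cancel_right,
    sum_Icc_eq_sum_range_succ, prod_Icc_eq_prod_range_succ, add_comm]

lemma one_add_sum_div_one_add_sum_eq_fixationProb (ρ : ℕ → ℝ) (hi : 1 ≤ i) (hN : 1 ≤ N) :
    (1 + ∑ j ∈ Icc 1 (i - 1), ∏ k ∈ Icc 1 j, (ρ k)⁻¹) /
      (1 + ∑ j ∈ Icc 1 (N - 1), ∏ k ∈ Icc 1 j, (ρ k)⁻¹) = fixationProb ρ N i := by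
  rw [one_add_sum_Icc_eq_sum_moranWeight ρ hi, one_add_sum_Icc_eq_sum_moranWeight ρ hN,
    fixationProb]

lemma moranWeight_pos (hρ : ∀ k ∈ Icc 1 j, 0 < ρ k) : 0 < moranWeight ρ j :=
  prod_pos fun k hk => inv_pos.2 (hρ _ (by simp only [mem_range, mem_Icc] at hk ⊢; omega))

lemma moranWeight_pos_of_lt (hρ : ∀ k ∈ Icc 1 (N - 1), 0 < ρ k) (hj : j < N) :
    0 < moranWeight ρ j :=
  moranWeight_pos fun k hk => hρ k (by simp only [mem_Icc] at hk ⊢; omega)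

lemma moranWeight_le_inv_pow {Q : ℝ} (hQ : 0 < Q) (hρ : ∀ k ∈ Icc 1 j, Q ≤ ρ k) :
    moranWeight ρ j ≤ Q⁻¹ ^ j := by
  have hρ' : ∀ k ∈ range j, Q ≤ ρ (k + 1) := fun k hk =>
    hρ _ (by simp only [mem_range, mem_Icc] at hk ⊢; omega)
  calc moranWeight ρ j ≤ ∏ _k ∈ range j, Q⁻¹ :=
        prod_le_prod (fun k hk => (inv_pos.2 (hQ.trans_le (hρ' k hk))).le)
          (fun k hk => inv_anti₀ hQ (hρ' k hk))
    _ = Q⁻¹ ^ j := by rw [prod_const, card_range]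

lemma moranWeight_le_pow_mul {q : ℝ} (hρ : ∀ k ∈ Icc 1 n, 0 < ρ k ∧ ρ k ≤ q) (hjn : j ≤ n) :
    moranWeight ρ j ≤ q ^ (n - j) * moranWeight ρ n := by
  have hρ' : ∀ k ∈ Ico j n, 0 < ρ (k + 1) ∧ ρ (k + 1) ≤ q := fun k hk =>
    hρ _ (by simp only [mem_Ico, mem_Icc] at hk ⊢; omega)
  have hprod : ∏ k ∈ Ico j n, ρ (k + 1) ≤ q ^ (n - j) := by
    calc ∏ k ∈ Ico j n, ρ (k + 1) ≤ ∏ _k ∈ Ico j n, q :=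
          prod_le_prod (fun k hk => (hρ' k hk).1.le) (fun k hk => (hρ' k hk).2)
      _ = q ^ (n - j) := by rw [prod_const, Nat.card_Ico]
  have hsplit : moranWeight ρ j = moranWeight ρ n * ∏ k ∈ Ico j n, ρ (k + 1) := by
    rw [moranWeight, moranWeight, ← prod_range_mul_prod_Ico _ hjn, mul_assoc,
      ← prod_mul_distrib, prod_eq_one fun k hk => inv_mul_cancel₀ (hρ' k hk).1.ne', mul_one]
  rw [hsplit, mul_comm]
  exact mul_le_mul_of_nonneg_right hprod
    (moranWeight_pos fun k hk => (hρ k hk).1).le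

end Weights

section FixationProb

variable {ρ : ℕ → ℝ} {N i : ℕ}

lemma fixationProb_nonneg (hρ : ∀ k ∈ Icc 1 (N - 1), 0 < ρ k) (hiN : i ≤ N) :
    0 ≤ fixationProb ρ N i := by
  have hw : ∀ j ∈ range N, 0 ≤ moranWeight ρ j := fun j hj =>
    (moranWeight_pos_of_lt hρ (mem_range.1 hj)).le
  exact div_nonneg (sum_nonneg fun j hj => hw j (range_subset_range.2 hiN hj)) (sum_nonneg hw)

lemma fixationProb_le_one (hρ : ∀ k ∈ Icc 1 (N - 1), 0 < ρ k) (hiN : i ≤ N) :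
    fixationProb ρ N i ≤ 1 := by
  have hw : ∀ j ∈ range N, 0 ≤ moranWeight ρ j := fun j hj =>
    (moranWeight_pos_of_lt hρ (mem_range.1 hj)).le
  exact div_le_one_of_le₀ (sum_le_sum_of_subset_of_nonneg (range_subset_range.2 hiN)
    fun j hj _ => hw j hj) (sum_nonneg hw)

lemma one_sub_fixationProb_le {Q : ℝ} (hQ : 1 ≤ Q) (hρ : ∀ k ∈ Icc 1 (N - 1), Q ≤ ρ k)
    (hN : 1 ≤ N) (hiN : i ≤ N) :
    1 - fixationProb ρ N i ≤ (N - i : ℕ) * Q⁻¹ ^ i := by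
  have hQ0 : 0 < Q := one_pos.trans_le hQ
  have hw : ∀ j ∈ range N, 0 ≤ moranWeight ρ j := fun j hj =>
    (moranWeight_pos_of_lt (fun k hk => hQ0.trans_le (hρ k hk)) (mem_range.1 hj)).le
  set T := ∑ j ∈ Ico i N, moranWeight ρ j
  have hT : T ≤ (N - i : ℕ) * Q⁻¹ ^ i := by
    calc T ≤ #(Ico i N) • Q⁻¹ ^ i := sum_le_card_nsmul _ _ _ fun j hj => ?_
      _ = (N - i : ℕ) * Q⁻¹ ^ i := by rw [Nat.card_Ico, nsmul_eq_mul]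
    rw [mem_Ico] at hj
    refine (moranWeight_le_inv_pow hQ0 fun k hk => hρ k ?_).trans
      (pow_le_pow_of_le_one (by positivity) (inv_le_one_of_one_le₀ hQ) hj.1)
    simp only [mem_Icc] at hk ⊢; omega
  have hS : 1 ≤ ∑ j ∈ range N, moranWeight ρ j := by
    simpa [moranWeight] using single_le_sum hw (mem_range.2 hN)
  have hsplit := sum_range_add_sum_Ico (moranWeight ρ) hiN
  have hT0 : 0 ≤ T := sum_nonneg fun j hj => hw j (by simp only [mem_Ico, mem_range] at hj ⊢; omega)
  calc 1 - fixationProb ρ N i = T / ∑ j ∈ range N, moranWeight ρ j := by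
        rw [fixationProb, eq_div_iff (by linarith), sub_mul, one_mul,
          div_mul_cancel₀ _ (by linarith), ← hsplit]
        ring
    _ ≤ T := div_le_self hT0 hS
    _ ≤ _ := hT

lemma fixationProb_le_mul_pow {q : ℝ} (hq0 : 0 ≤ q) (hq1 : q ≤ 1)
    (hρ : ∀ k ∈ Icc 1 (N - 1), 0 < ρ k ∧ ρ k ≤ q) (hN : 1 ≤ N) (hiN : i ≤ N) :
    fixationProb ρ N i ≤ i * q ^ (N - i) := by
  set W := moranWeight ρ (N - 1)
  have hW : 0 < W := moranWeight_pos fun k hk => (hρ k hk).1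
  have hw : ∀ j ∈ range N, 0 ≤ moranWeight ρ j := fun j hj =>
    (moranWeight_pos_of_lt (fun k hk => (hρ k hk).1) (mem_range.1 hj)).le
  have hnum : ∑ j ∈ range i, moranWeight ρ j ≤ i * q ^ (N - i) * W := by
    calc ∑ j ∈ range i, moranWeight ρ j ≤ #(range i) • (q ^ (N - i) * W) :=
          sum_le_card_nsmul _ _ _ fun j hj => ?_
      _ = i * q ^ (N - i) * W := by rw [card_range, nsmul_eq_mul, mul_assoc]
    rw [mem_range] at hj
    refine (moranWeight_le_pow_mul hρ (by omega)).trans (mul_le_mul_of_nonneg_right ?_ hW.le)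
    exact pow_le_pow_of_le_one hq0 hq1 (by omega)
  have hden : W ≤ ∑ j ∈ range N, moranWeight ρ j := single_le_sum hw (mem_range.2 (by omega))
  calc fixationProb ρ N i ≤ (∑ j ∈ range i, moranWeight ρ j) / W :=
        div_le_div_of_nonneg_left
          (sum_nonneg fun j hj => hw j (range_subset_range.2 hiN hj)) hW hden
    _ ≤ i * q ^ (N - i) := by rwa [div_le_iff₀ hW]

end FixationProb

section Limits

variable {ρ : ℕ → ℕ → ℝ} {N₀ k : ℕ}

lemma tendsto_fixationProb_one {Q : ℝ} (hQ : 1 < Q)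
    (hρ : ∀ᶠ N in atTop, ∀ j ∈ Icc 1 (N - 1), Q ≤ ρ N j) (hk0 : 0 < k) (hkN₀ : k ≤ N₀) :
    Tendsto (fun m : ℕ => fixationProb (ρ (m * N₀)) (m * N₀) (m * k)) atTop (𝓝 1) := by
  have hN₀ : 0 < N₀ := hk0.trans_le hkN₀
  have hρm := (tendsto_atTop_mono (fun m => Nat.le_mul_of_pos_right m hN₀) tendsto_id).eventually hρ
  have hθ : Q⁻¹ ^ k < 1 := pow_lt_one₀ (by positivity) (inv_lt_one_of_one_lt₀ hQ) hk0.ne'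
  have hlim : Tendsto (fun m : ℕ => 1 - ((N₀ - k : ℕ) : ℝ) * (m * (Q⁻¹ ^ k) ^ m)) atTop (𝓝 1) := by
    simpa using ((tendsto_self_mul_const_pow_of_lt_one (by positivity) hθ).const_mul
      ((N₀ - k : ℕ) : ℝ)).const_sub 1
  refine tendsto_of_tendsto_of_tendsto_of_le_of_le' hlim tendsto_const_nhds ?_ ?_
  · filter_upwards [hρm, eventually_ge_atTop 1] with m hm hm1
    calc 1 - ((N₀ - k : ℕ) : ℝ) * (m * (Q⁻¹ ^ k) ^ m)
        = 1 - ((m * N₀ - m * k : ℕ) : ℝ) * Q⁻¹ ^ (m * k) := by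
          rw [← Nat.mul_sub, pow_mul']; push_cast; ring
      _ ≤ _ := by
          rw [tsub_le_iff_tsub_le]
          exact one_sub_fixationProb_le hQ.le hm (Nat.mul_le_mul hm1 hN₀)
            (Nat.mul_le_mul_left m hkN₀)
  · filter_upwards [hρm] with m hm
    exact fixationProb_le_one (fun j hj => (one_pos.trans hQ).trans_le (hm j hj))
      (Nat.mul_le_mul_left m hkN₀)

lemma tendsto_fixationProb_zero {q : ℝ} (hq0 : 0 ≤ q) (hq1 : q < 1)
    (hρ : ∀ᶠ N in atTop, ∀ j ∈ Icc 1 (N - 1), 0 < ρ N j ∧ ρ N j ≤ q) (hkN₀ : k < N₀) :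
    Tendsto (fun m : ℕ => fixationProb (ρ (m * N₀)) (m * N₀) (m * k)) atTop (𝓝 0) := by
  have hN₀ : 0 < N₀ := k.zero_le.trans_lt hkN₀
  have hρm := (tendsto_atTop_mono (fun m => Nat.le_mul_of_pos_right m hN₀) tendsto_id).eventually hρ
  have hθ : q ^ (N₀ - k) < 1 := pow_lt_one₀ hq0 hq1 (by omega)
  have hlim : Tendsto (fun m : ℕ => (k : ℝ) * (m * (q ^ (N₀ - k)) ^ m)) atTop (𝓝 0) := by
    simpa using (tendsto_self_mul_const_pow_of_lt_one (by positivity) hθ).const_mul (k : ℝ)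
  refine tendsto_of_tendsto_of_tendsto_of_le_of_le' tendsto_const_nhds hlim ?_ ?_
  · filter_upwards [hρm] with m hm
    exact fixationProb_nonneg (fun j hj => (hm j hj).1) (Nat.mul_le_mul_left m hkN₀.le)
  · filter_upwards [hρm, eventually_ge_atTop 1] with m hm hm1
    calc _ ≤ ((m * k : ℕ) : ℝ) * q ^ (m * N₀ - m * k) :=
          fixationProb_le_mul_pow hq0 hq1.le hm (Nat.mul_le_mul hm1 hN₀)
            (Nat.mul_le_mul_left m hkN₀.le)
      _ = _ := by rw [← Nat.mul_sub, pow_mul']; push_cast; ring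

end Limits

end Moran

end

open Moran

theorem moran_large_N_dominance_general
    (a b c d w : ℝ)
    (ha : 0 < a) (hb : 0 < b) (hc : 0 < c) (hd : 0 < d)
    (hw0 : 0 ≤ w) (hw1 : w ≤ 1)
    (r : ℕ → ℕ → ℝ)
    (hr : ∀ N i, 3 ≤ N → 1 ≤ i →
      r N i = (1 - w + w * (a * ((i : ℝ) - 1) / ((N : ℝ) - 1) +
                b * ((N : ℝ) - (i : ℝ)) / ((N : ℝ) - 1))) /
              (1 - w + w * (c * (i : ℝ) / ((N : ℝ) - 1) +
                d * ((N : ℝ) - (i : ℝ) - 1) / ((N : ℝ) - 1))))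
    (R : ℝ → ℝ)
    (hR : ∀ y, R y = (1 - w + w * (a * y + b * (1 - y))) /
                     (1 - w + w * (c * y + d * (1 - y))))
    (π : ℕ → ℕ → ℝ)
    (hπ : ∀ N i, 3 ≤ N → 1 ≤ i → i ≤ N - 1 →
      π N i = (1 + ∑ j ∈ Finset.Icc 1 (i - 1), ∏ k ∈ Finset.Icc 1 j, (r N k)⁻¹) /
              (1 + ∑ j ∈ Finset.Icc 1 (N - 1), ∏ k ∈ Finset.Icc 1 j, (r N k)⁻¹))
    (N₀ : ℕ) (hN₀ : 0 < N₀) (x : ℝ) (hx0 : 0 < x) (hx1 : x < 1)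
    (k : ℕ) (hk : (k : ℝ) = (N₀ : ℝ) * x) :
    (1 < R 0 → 1 < R 1 →
      Filter.Tendsto (fun m : ℕ => π (m * N₀) (m * k)) Filter.atTop (nhds 1)) ∧
    (R 0 < 1 → R 1 < 1 →
      Filter.Tendsto (fun m : ℕ => π (m * N₀) (m * k)) Filter.atTop (nhds 0)) := by
  have hk0 : 0 < k := by exact_mod_cast (show (0 : ℝ) < k by rw [hk]; positivity)
  have hkN₀ : k < N₀ := by
    exact_mod_cast (show (k : ℝ) < N₀ by rw [hk]; nlinarith [(Nat.cast_pos (α := ℝ)).2 hN₀])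
  have hπm : ∀ᶠ m in atTop, fixationProb (r (m * N₀)) (m * N₀) (m * k) = π (m * N₀) (m * k) := by
    filter_upwards [eventually_ge_atTop 3] with m hm
    have hmk : m * k + m ≤ m * N₀ := by rw [← Nat.mul_succ]; exact Nat.mul_le_mul_left m hkN₀
    have hmk0 : 1 ≤ m * k := Nat.mul_pos (by omega) hk0
    rw [hπ _ _ (by omega) hmk0 (by omega),
      one_add_sum_div_one_add_sum_eq_fixationProb _ hmk0 (by omega)]
  have hrm : ∀ᶠ N in atTop, ∀ i ∈ Icc 1 (N - 1), r N i = moranRatio w a b c d N i := by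
    filter_upwards [eventually_ge_atTop 3] with N hN i hi
    rw [hr N i hN (mem_Icc.1 hi).1, moranRatio, fitness_sub_one_div, fitness_div] <;>
      exact Nat.cast_ne_one.2 (by omega)
  have hR' : ∀ y, R y = fitness w a b y / fitness w c d y := hR
  have hG0 := fitness_pos hw0 hw1 hc hd le_rfl zero_le_one
  have hG1 := fitness_pos hw0 hw1 hc hd zero_le_one le_rfl
  constructor
  · intro h0 h1
    rw [hR', one_lt_div hG0] at h0
    rw [hR', one_lt_div hG1] at h1
    obtain ⟨Q, hQ, hev⟩ := exists_eventually_le_moranRatio hw0 hw1 hc hd h0 h1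
    refine (tendsto_fixationProb_one hQ ?_ hk0 hkN₀.le).congr' hπm
    filter_upwards [hev, hrm] with N hN hrN i hi using hrN i hi ▸ hN i hi
  · intro h0 h1
    rw [hR', div_lt_one hG0] at h0
    rw [hR', div_lt_one hG1] at h1
    obtain ⟨Q, hQ, hev⟩ := exists_eventually_moranRatio_le_inv hw0 hw1 ha hb hc hd h0 h1
    refine (tendsto_fixationProb_zero (inv_nonneg.2 (zero_le_one.trans hQ.le))
      (inv_lt_one_of_one_lt₀ hQ) ?_ hkN₀).congr' hπm
    filter_upwards [hev, hrm] with N hN hrN i hi using hrN i hi ▸ hN i hi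

/-- along N = m·N₀ with N₀·x integer, x ∈ (0,1):
if R(0) > 1 and R(1) > 1 then π_{Nx}^{(N)} → 1, and if R(0) < 1 and R(1) < 1
then π_{Nx}^{(N)} → 0. -/
theorem moran_large_N_dominance
    (a b c d w : ℝ)
    (ha : 0 < a) (hb : 0 < b) (hc : 0 < c) (hd : 0 < d)
    (hw0 : 0 ≤ w) (hw1 : w ≤ 1)
    (r : ℕ → ℕ → ℝ)
    (hr : ∀ N i, 3 ≤ N → 1 ≤ i →
      r N i = (1 - w + w * (a * ((i : ℝ) - 1) / ((N : ℝ) - 1) +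
                b * ((N : ℝ) - (i : ℝ)) / ((N : ℝ) - 1))) /
              (1 - w + w * (c * (i : ℝ) / ((N : ℝ) - 1) +
                d * ((N : ℝ) - (i : ℝ) - 1) / ((N : ℝ) - 1))))
    (R : ℝ → ℝ)
    (hR : ∀ y, R y = (1 - w + w * (a * y + b * (1 - y))) /
                     (1 - w + w * (c * y + d * (1 - y))))
    (π : ℕ → ℕ → ℝ)
    (hπ0 : ∀ N, π N 0 = 0) (hπN : ∀ N, π N N = 1)
    (hπ : ∀ N i, 3 ≤ N → 1 ≤ i → i ≤ N - 1 →
      π N i = (1 + ∑ j ∈ Finset.Icc 1 (i - 1), ∏ k ∈ Finset.Icc 1 j, (r N k)⁻¹) /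
              (1 + ∑ j ∈ Finset.Icc 1 (N - 1), ∏ k ∈ Finset.Icc 1 j, (r N k)⁻¹))
    (N₀ : ℕ) (hN₀ : 0 < N₀) (x : ℝ) (hx0 : 0 < x) (hx1 : x < 1)
    (k : ℕ) (hk : (k : ℝ) = (N₀ : ℝ) * x) :
    (1 < R 0 → 1 < R 1 →
      Filter.Tendsto (fun m : ℕ => π (m * N₀) (m * k)) Filter.atTop (nhds 1)) ∧
    (R 0 < 1 → R 1 < 1 →
      Filter.Tendsto (fun m : ℕ => π (m * N₀) (m * k)) Filter.atTop (nhds 0)) :=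
  moran_large_N_dominance_general a b c d w ha hb hc hd hw0 hw1 r hr R hR π hπ N₀ hN₀ x hx0 hx1 k hk
end

section
/- For every real α > 0 and every nonnegative integer m, lim_{N→∞} N^m · ( Σ_{k=0}^∞ e^{−(α/N)·k²} − (1/2)·√(πN/α) − 1/2 ) = 0, where N ranges over the positive integers; that is, Σ_{k=0}^∞ e^{−(α/N)k²} = (1/2)·√(πN/α) + 1/2 + o(N^{−m}) for every m ≥ 0. -/
open Real Filter

lemma summable_aux {b : ℝ} (hb : 0 < b) : Summable (fun k : ℕ => Real.exp (-b * (k:ℝ)^2)) := by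
  have hg : Summable (fun k : ℕ => Real.exp (-b) ^ k) :=
    summable_geometric_of_lt_one (Real.exp_pos _).le
      (Real.exp_lt_one_iff.mpr (by linarith))
  refine Summable.of_nonneg_of_le (fun k => (Real.exp_pos _).le) (fun k => ?_) hg
  rw [← Real.exp_nat_mul]
  apply Real.exp_le_exp.mpr
  have hk1 : (0:ℝ) ≤ (k:ℝ)^2 - k := by
    rcases Nat.eq_zero_or_pos k with h|h
    · simp [h]
    · have : (1:ℝ) ≤ (k:ℝ) := by exact_mod_cast h
      nlinarith
  nlinarith

lemma tsum_int_eq {b : ℝ} (hb : 0 < b) :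
    (∑' n : ℤ, Real.exp (-b * (n:ℝ)^2)) = 2 * (∑' k : ℕ, Real.exp (-b * (k:ℝ)^2)) - 1 := by
  have h1 : Summable (fun k : ℕ => Real.exp (-b * (k:ℝ)^2)) := summable_aux hb
  have h1' : Summable (fun k : ℕ => Real.exp (-b * (((k:ℕ):ℤ):ℝ)^2)) := by
    refine h1.congr fun k => ?_; push_cast; ring_nf
  have h2 : Summable (fun k : ℕ => Real.exp (-b * (((-((k:ℕ)+1)):ℤ):ℝ)^2)) := by
    have h := (summable_nat_add_iff (f := fun k : ℕ => Real.exp (-b * (k:ℝ)^2)) 1).mpr h1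
    refine h.congr fun k => ?_
    push_cast; ring_nf
  rw [tsum_of_nat_of_neg_add_one (f := fun n : ℤ => Real.exp (-b * (n:ℝ)^2)) h1' h2]
  have h3 : (∑' k : ℕ, Real.exp (-b * (((-((k:ℕ)+1)):ℤ):ℝ)^2))
      = (∑' k : ℕ, Real.exp (-b * (((k:ℕ)+1):ℝ)^2)) :=
    tsum_congr fun k => by push_cast; ring_nf
  have h4 := (Summable.tsum_eq_zero_add h1)
  simp only [Nat.cast_zero, Nat.cast_add, Nat.cast_one] at h4
  rw [h3]
  have h5 : (∑' k : ℕ, Real.exp (-b * (((k:ℕ)+1):ℝ)^2))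
      = (∑' k : ℕ, Real.exp (-b * (k:ℝ)^2)) - 1 := by
    rw [h4]; simp
  have h6 : (∑' k : ℕ, Real.exp (-b * (((k:ℕ):ℤ):ℝ)^2))
      = (∑' k : ℕ, Real.exp (-b * (k:ℝ)^2)) := tsum_congr fun k => by push_cast; ring_nf
  rw [h5, h6]; ring

lemma poisson_aux {b : ℝ} (hb : 0 < b) :
    (∑' n : ℤ, Real.exp (-b * (n:ℝ)^2))
      = Real.sqrt (π / b) * ∑' n : ℤ, Real.exp (-(π^2/b) * (n:ℝ)^2) := by
  have hπ := Real.pi_pos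
  have ha : 0 < b / π := div_pos hb hπ
  have h := Real.tsum_exp_neg_mul_int_sq ha
  have e1 : ∀ n : ℤ, -π * (b / π) * (n:ℝ)^2 = -b * (n:ℝ)^2 := by
    intro n; field_simp
  have e2 : ∀ n : ℤ, -π / (b / π) * (n:ℝ)^2 = -(π^2/b) * (n:ℝ)^2 := by
    intro n
    rw [div_div_eq_mul_div]
    ring
  have e3 : (1:ℝ) / (b / π) ^ ((1:ℝ)/2) = Real.sqrt (π / b) := by
    rw [← Real.sqrt_eq_rpow, one_div, ← Real.sqrt_inv, inv_div]
  simp only [e1, e2, e3] at h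
  rw [h]

lemma key_identity (α : ℝ) (hα : 0 < α) {N : ℕ} (hN : 0 < N) :
    (∑' k : ℕ, Real.exp (-(α / N) * (k : ℝ) ^ 2)) - (1/2) * Real.sqrt (π * N / α) - 1/2
      = Real.sqrt (π * N / α) * ((∑' k : ℕ, Real.exp (-(π^2 * N / α) * (k:ℝ)^2)) - 1) := by
  have hN' : (0:ℝ) < N := by exact_mod_cast hN
  have hb : 0 < α / N := div_pos hα hN'
  have hd : 0 < π^2 * N / α := by positivity
  have h1 := tsum_int_eq hb
  have h2 := tsum_int_eq hd
  have hp := poisson_aux hb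
  have e1 : π / (α / N) = π * N / α := by field_simp
  have e2 : ∀ n : ℤ, -(π^2 / (α / N)) * (n:ℝ)^2 = -(π^2 * N / α) * (n:ℝ)^2 := by
    intro n
    rw [div_div_eq_mul_div]
  rw [e1] at hp
  simp only [e2] at hp
  rw [h1, h2] at hp
  linear_combination hp / 2

lemma tail_bound {c d : ℝ} (hc : 0 < c) (hcd : c ≤ d) :
    (∑' k : ℕ, Real.exp (-d * (k:ℝ)^2)) - 1 ∈
      Set.Icc 0 (Real.exp (-d) * (1 - Real.exp (-c))⁻¹) := by
  have hd : 0 < d := lt_of_lt_of_le hc hcd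
  have hsum := summable_aux hd
  have h0 := Summable.tsum_eq_zero_add hsum
  simp only [Nat.cast_zero, Nat.cast_add, Nat.cast_one] at h0
  have hr1 : Real.exp (-d) < 1 := Real.exp_lt_one_iff.mpr (by linarith)
  have hsum2 : Summable (fun k : ℕ => Real.exp (-d) ^ (k+1)) := by
    exact ((summable_geometric_of_lt_one (Real.exp_pos _).le hr1).mul_left _).congr
      (fun k => by rw [pow_succ'])
  have hsum1 : Summable (fun k : ℕ => Real.exp (-d * ((k:ℝ)+1)^2)) := by
    simpa using (summable_nat_add_iff (f := fun k : ℕ => Real.exp (-d * (k:ℝ)^2)) 1).mpr hsum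
  have h00 : Real.exp (-d * (0:ℝ)^2) = 1 := by norm_num
  constructor
  · rw [h0, h00]
    have : 0 ≤ ∑' k : ℕ, Real.exp (-d * ((k:ℝ)+1)^2) :=
      tsum_nonneg fun k => (Real.exp_pos _).le
    linarith
  · rw [h0, h00]
    have hle : (∑' k : ℕ, Real.exp (-d * ((k:ℝ)+1)^2)) ≤ ∑' k : ℕ, Real.exp (-d) ^ (k+1) := by
      refine Summable.tsum_le_tsum (fun k => ?_) hsum1 hsum2
      rw [← Real.exp_nat_mul]
      apply Real.exp_le_exp.mpr
      push_cast
      nlinarith [mul_nonneg hd.le (mul_nonneg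
        (by positivity : (0:ℝ) ≤ (k:ℝ)+1) (Nat.cast_nonneg k : (0:ℝ) ≤ (k:ℝ)))]
    have hgeo : (∑' k : ℕ, Real.exp (-d) ^ (k+1))
        = Real.exp (-d) * (1 - Real.exp (-d))⁻¹ := by
      have : (∑' k : ℕ, Real.exp (-d) ^ (k+1)) = Real.exp (-d) * ∑' k : ℕ, Real.exp (-d) ^ k := by
        rw [← tsum_mul_left]
        exact tsum_congr fun k => by rw [pow_succ']
      rw [this, tsum_geometric_of_lt_one (Real.exp_pos _).le hr1]
    have hmono : Real.exp (-d) * (1 - Real.exp (-d))⁻¹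
        ≤ Real.exp (-d) * (1 - Real.exp (-c))⁻¹ := by
      have h1 : Real.exp (-d) ≤ Real.exp (-c) := Real.exp_le_exp.mpr (by linarith)
      have h2 : 0 < 1 - Real.exp (-c) := by
        have : Real.exp (-c) < 1 := Real.exp_lt_one_iff.mpr (by linarith)
        linarith
      exact mul_le_mul_of_nonneg_left
        (inv_anti₀ h2 (by linarith)) (Real.exp_pos _).le
    rw [add_sub_cancel_left]
    calc _ ≤ _ := hle
    _ = _ := hgeo
    _ ≤ _ := hmono

/-- for every α > 0 and every m ≥ 0,
Σ_{k=0}^∞ e^{−(α/N)k²} = (1/2)·√(πN/α) + 1/2 + o(N^{−m}) as N → ∞. -/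
theorem gaussian_sum_euler_maclaurin_asymptotics
    (α : ℝ) (hα : 0 < α) (m : ℕ) :
    Filter.Tendsto
      (fun N : ℕ => (N : ℝ) ^ m *
        ((∑' k : ℕ, Real.exp (-(α / N) * (k : ℝ) ^ 2)) -
          (1 / 2) * Real.sqrt (Real.pi * N / α) - 1 / 2))
      Filter.atTop (nhds 0) := by
  have hπ := Real.pi_pos
  set c := π^2/α with hc_def
  have hc : 0 < c := by positivity
  set C := Real.sqrt (π/α) * (1 - Real.exp (-c))⁻¹ * (c⁻¹)^(m+1) with hC
  clear_value C c
  have hg : Filter.Tendsto (fun N : ℕ => C * ((c*(N:ℝ))^(m+1) * Real.exp (-(c*(N:ℝ)))))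
      Filter.atTop (nhds 0) := by
    have h1 : Filter.Tendsto (fun N : ℕ => c * (N:ℝ)) Filter.atTop Filter.atTop :=
      tendsto_natCast_atTop_atTop.const_mul_atTop hc
    have h2 := (tendsto_pow_mul_exp_neg_atTop_nhds_zero (m+1)).comp h1
    simpa [Function.comp] using h2.const_mul C
  refine squeeze_zero_norm' ?_ hg
  filter_upwards [Filter.eventually_ge_atTop 1] with N hN
  have hN' : (0:ℝ) < N := by exact_mod_cast hN
  have hN1 : (1:ℝ) ≤ N := by exact_mod_cast hN
  have hd : π^2 * N / α = c * N := by rw [hc_def]; ring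
  have hcd : c ≤ π^2 * N / α := by rw [hd]; nlinarith
  have hkey := key_identity α hα (N := N) (by omega)
  obtain ⟨hT0, hT1⟩ := tail_bound hc hcd
  have hT1' : (∑' k : ℕ, Real.exp (-(π^2 * N / α) * (k:ℝ)^2)) - 1
      ≤ Real.exp (-(c*(N:ℝ))) * (1 - Real.exp (-c))⁻¹ := by rw [← hd]; exact hT1
  set T := (∑' k : ℕ, Real.exp (-(π^2 * N / α) * (k:ℝ)^2)) - 1 with hT
  rw [hkey]
  have hsqrt : Real.sqrt (π*N/α) ≤ Real.sqrt (π/α) * N := by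
    have h1 : π*N/α = (π/α) * N := by ring
    rw [h1, Real.sqrt_mul (by positivity) ]
    refine mul_le_mul_of_nonneg_left ?_ (Real.sqrt_nonneg _)
    calc Real.sqrt (N:ℝ) ≤ Real.sqrt ((N:ℝ)^2) := Real.sqrt_le_sqrt (by nlinarith)
    _ = N := Real.sqrt_sq hN'.le
  have hnorm : ‖(N:ℝ)^m * (Real.sqrt (π*N/α) * T)‖ = (N:ℝ)^m * (Real.sqrt (π*N/α) * T) := by
    rw [Real.norm_eq_abs, abs_of_nonneg]
    exact mul_nonneg (pow_nonneg hN'.le m) (mul_nonneg (Real.sqrt_nonneg _) hT0)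
  rw [hnorm]
  calc (N:ℝ)^m * (Real.sqrt (π*N/α) * T)
      ≤ (N:ℝ)^m * ((Real.sqrt (π/α) * N) * (Real.exp (-(c*N)) * (1 - Real.exp (-c))⁻¹)) := by
        refine mul_le_mul_of_nonneg_left ?_ (pow_nonneg hN'.le m)
        refine mul_le_mul hsqrt hT1' hT0 (by positivity)
    _ = C * ((c*(N:ℝ))^(m+1) * Real.exp (-(c*(N:ℝ)))) := by
        have hcc : (c⁻¹)^(m+1) * c^(m+1) = 1 := by
          rw [← mul_pow, inv_mul_cancel₀ hc.ne', one_pow]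
        rw [hC, mul_pow]
        linear_combination (-(1:ℝ) * Real.sqrt (π/α) * (1 - Real.exp (-c))⁻¹ * (N:ℝ)^(m+1) *
          Real.exp (-(c*(N:ℝ)))) * hcc
end
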